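/- arXiv:2505.09465 — 7 statements merged into one kernel-verified Lean document; each statement's English description precedes it below -/
import Mathlib

section
/- Let d ≥ 2 be an integer and let 0 < ε < 1 and C ≥ 0 be real numbers. Suppose that for every positive integer m and every finite list w_1, …, w_m of vectors in ℝ^d with 1 − ε ≤ |w_i| ≤ 1 for all i, there exists a permutation π of {1,…,m} such that for every j ∈ {1,…,m}, |∑_{i=1}^{j} w_{π(i)} − (j/m)·∑_{i=1}^{m} w_i| ≤ C. Then for every positive integer n and every finite list v_1, …, v_n of vectors in ℝ^d with |v_i| ≤ 1 for all i and ∑_{i=1}^{n} v_i = 0, there exists a permutation τ of {1,…,n} such that for every k ∈ {1,…,n}, |∑_{i=1}^{k} v_{τ(i)}| ≤ (1/ε)·(C + 200·√(d/log d)). -/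
open List

section SteinitzHelpers

variable {E : Type*} [NormedAddCommGroup E] {ι : Type*}

private lemma my_perm_flatten {α : Type*} {l₁ l₂ : List (List α)} (h : l₁ ~ l₂) :
    l₁.flatten ~ l₂.flatten := by
  induction h with
  | nil => rfl
  | cons x _ ih => simpa using ih.append_left x
  | swap x y l =>
      simp only [flatten_cons, ← append_assoc]
      exact (perm_append_comm).append_right _
  | trans _ _ ih1 ih2 => exact ih1.trans ih2

private lemma my_map_sum_flatten (f : ι → E) (Xs : List (List ι)) :
    (Xs.flatten.map f).sum = (Xs.map (fun B => (B.map f).sum)).sum := by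
  rw [map_flatten, sum_flatten, map_map]
  rfl

private lemma my_fin_Iic_filter {m : ℕ} (j : Fin m) :
    Finset.Iic j = Finset.univ.filter (fun i : Fin m => i.val < j.val + 1) := by
  ext i
  simp only [Finset.mem_Iic, Finset.mem_filter, Finset.mem_univ, true_and, Nat.lt_succ_iff,
    Fin.le_def]

private lemma my_sum_Iic_take {m : ℕ} (g : Fin m → E) (j : Fin m) :
    ∑ i ∈ Finset.Iic j, g i = ((List.ofFn g).take (j.val + 1)).sum := by
  rw [List.sum_take_ofFn, my_fin_Iic_filter]

private lemma my_ofFn_get_cast {α : Type*} {n : ℕ} (l : List α) (h : l.length = n) :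
    List.ofFn (fun i : Fin n => l.get (Fin.cast h.symm i)) = l := by
  subst h
  simp [List.ofFn_get]

private lemma my_chunk (f : ι → E) (θ : ℝ) (hθ : 0 < θ) :
    ∀ (N : ℕ) (L : List ι), L.length ≤ N → (∀ x ∈ L, ‖f x‖ ≤ 1) →
    ∃ (Bs : List (List ι)) (T : List ι),
      L = Bs.flatten ++ T ∧
      (∀ B ∈ Bs, θ ≤ ‖(B.map f).sum‖ ∧ ∀ k, ‖((B.take k).map f).sum‖ ≤ θ + 1) ∧
      (∀ k, ‖((T.take k).map f).sum‖ ≤ θ) := by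
  intro N
  induction N with
  | zero =>
    intro L hL _
    have : L = [] := by
      cases L with
      | nil => rfl
      | cons a l => simp at hL
    subst this
    exact ⟨[], [], by simp, by simp, fun k => by simp; positivity⟩
  | succ N ih =>
    intro L hL hnorm
    by_cases hex : ∃ k, k ≤ L.length ∧ θ ≤ ‖((L.take k).map f).sum‖
    · classical
      set k₀ := Nat.find hex with hk₀def
      obtain ⟨hk₀len, hk₀ge⟩ : k₀ ≤ L.length ∧ θ ≤ ‖((L.take k₀).map f).sum‖ := Nat.find_spec hex
      have hmin : ∀ k, k < k₀ → ‖((L.take k).map f).sum‖ < θ := by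
        intro k hk
        have h2 := Nat.find_min hex hk
        push_neg at h2
        exact h2 (le_trans hk.le hk₀len)
      have hk₀pos : 0 < k₀ := by
        rcases Nat.eq_zero_or_pos k₀ with h | h
        · exfalso
          rw [h] at hk₀ge
          simp at hk₀ge
          linarith
        · exact h
      have hrest : (L.drop k₀).length ≤ N := by
        rw [length_drop]
        omega
      obtain ⟨Bs', T, hsplit, hblocks, htail⟩ :=
        ih (L.drop k₀) hrest (fun x hx => hnorm x (mem_of_mem_drop hx))
      refine ⟨L.take k₀ :: Bs', T, ?_, ?_, htail⟩
      · rw [flatten_cons, append_assoc, ← hsplit, take_append_drop]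
      · intro B' hB'
        rcases mem_cons.mp hB' with rfl | h
        · refine ⟨hk₀ge, fun k => ?_⟩
          rw [take_take]
          rcases lt_or_ge (min k k₀) k₀ with h | h
          · have := hmin _ h
            linarith
          · have hmm : min k k₀ = k₀ := le_antisymm (min_le_right _ _) h
            rw [hmm]
            have hk₁ : k₀ - 1 < L.length := by omega
            have hkk : k₀ - 1 < (L.map f).length := by simpa using hk₁
            have hstep := List.sum_take_succ (L.map f) (k₀ - 1) hkk
            have hke : k₀ - 1 + 1 = k₀ := by omega
            rw [hke] at hstep
            rw [← map_take, ← map_take] at hstep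
            rw [hstep]
            have h1 := hmin (k₀ - 1) (by omega)
            have h2 : ‖(L.map f)[k₀ - 1]‖ ≤ 1 := by
              rw [getElem_map]
              exact hnorm _ (getElem_mem hk₁)
            calc ‖((L.take (k₀ - 1)).map f).sum + (L.map f)[k₀ - 1]‖
                ≤ ‖((L.take (k₀ - 1)).map f).sum‖ + ‖(L.map f)[k₀ - 1]‖ := norm_add_le _ _
              _ ≤ θ + 1 := by linarith
        · exact hblocks B' h
    · push_neg at hex
      refine ⟨[], L, by simp, by simp, fun k => ?_⟩
      rcases le_or_gt k L.length with h | h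
      · exact le_of_lt (lt_of_not_ge fun hle => absurd (hex k h) (not_lt.mpr hle))
      · rw [take_of_length_le h.le]
        have := hex L.length le_rfl
        rw [take_length] at this
        linarith

private lemma my_flatten_pfx (f : ι → E) (A D : ℝ) (hD : 0 ≤ D) :
    ∀ (Bs : List (List ι)) (s₀ : E),
    (∀ j, ‖s₀ + ((Bs.take j).flatten.map f).sum‖ ≤ A) →
    (∀ B ∈ Bs, ∀ k, ‖((B.take k).map f).sum‖ ≤ D) →
    ∀ k, ‖s₀ + ((Bs.flatten.take k).map f).sum‖ ≤ A + D := by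
  intro Bs
  induction Bs with
  | nil =>
    intro s₀ hA _ k
    have h0 := hA 0
    simp at h0 ⊢
    linarith
  | cons B rest ih =>
    intro s₀ hA hDD k
    rw [flatten_cons, take_append, map_append, sum_append]
    rcases le_or_gt k B.length with h | h
    · have h2 : k - B.length = 0 := by omega
      rw [h2]
      simp only [take_zero, map_nil, sum_nil, add_zero]
      have h0 := hA 0
      simp only [take_zero, flatten_nil, map_nil, sum_nil, add_zero] at h0
      calc ‖s₀ + ((B.take k).map f).sum‖ ≤ ‖s₀‖ + ‖((B.take k).map f).sum‖ := norm_add_le _ _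
        _ ≤ A + D := add_le_add h0 (hDD B mem_cons_self k)
    · rw [take_of_length_le h.le, ← add_assoc]
      refine ih (s₀ + (B.map f).sum) (fun j => ?_)
        (fun B' h' k' => hDD B' (mem_cons_of_mem _ h') k') (k - B.length)
      have := hA (j + 1)
      rw [take_succ_cons, flatten_cons, map_append, sum_append, ← add_assoc] at this
      exact this

end SteinitzHelpers

set_option maxHeartbeats 1000000 in

/-- If `C` bounds the ε-Steinitz constant of the Euclidean unit ball in `ℝ^d`
(the restricted Steinitz problem for vectors of norm in `[1-ε, 1]`, with partial
sums measured relative to the proportional drift), then the Euclidean Steinitz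
constant is at most `(1/ε) * (C + 200 * √(d / log d))`. -/
theorem steinitz_reduction_to_nearly_unit_vectors
    (d : ℕ) (hd : 2 ≤ d) (ε C : ℝ) (hε0 : 0 < ε) (hε1 : ε < 1) (hC : 0 ≤ C)
    (hyp : ∀ (m : ℕ), 0 < m → ∀ w : Fin m → EuclideanSpace ℝ (Fin d),
      (∀ i, 1 - ε ≤ ‖w i‖ ∧ ‖w i‖ ≤ 1) →
      ∃ π : Equiv.Perm (Fin m), ∀ j : Fin m,
        ‖(∑ i ∈ Finset.Iic j, w (π i)) -
          (((j : ℕ) + 1 : ℝ) / (m : ℝ)) • ∑ i, w i‖ ≤ C) :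
    ∀ (n : ℕ), 0 < n → ∀ v : Fin n → EuclideanSpace ℝ (Fin d),
      (∀ i, ‖v i‖ ≤ 1) → (∑ i, v i) = 0 →
      ∃ τ : Equiv.Perm (Fin n), ∀ k : Fin n,
        ‖∑ i ∈ Finset.Iic k, v (τ i)‖ ≤
          (1 / ε) * (C + 200 * Real.sqrt ((d : ℝ) / Real.log d)) := by
  intro n hn v hv hsum
  classical
  set θ : ℝ := (1 - ε) / ε with hθdef
  have hθpos : 0 < θ := div_pos (by linarith) hε0
  have hεθ : ε * θ = 1 - ε := by
    rw [hθdef]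
    field_simp
  obtain ⟨Bs, T, hsplit, hblocks, htail⟩ :=
    my_chunk v θ hθpos (List.finRange n).length (List.finRange n) le_rfl
      (fun x _ => hv x)
  set m := Bs.length with hmdef
  set s : Fin m → EuclideanSpace ℝ (Fin d) := fun t => ((Bs.get t).map v).sum with hsdef
  have hLsum : ((List.finRange n).map v).sum = 0 := by
    rw [← Fin.sum_univ_def]
    exact hsum
  have hTnorm : ‖(T.map v).sum‖ ≤ θ := by
    have h := htail T.length
    rwa [take_length] at h
  have hflat_eq : (Bs.flatten.map v).sum = ∑ t, s t := by
    rw [my_map_sum_flatten]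
    conv_lhs => rw [← ofFn_get Bs]
    rw [map_ofFn, sum_ofFn]
    rfl
  have hflatT : (Bs.flatten.map v).sum + (T.map v).sum = 0 := by
    rw [← sum_append, ← map_append, ← hsplit, hLsum]
  have hJnorm : ‖(Bs.flatten.map v).sum‖ ≤ θ := by
    have h : (Bs.flatten.map v).sum = -(T.map v).sum := eq_neg_of_add_eq_zero_left hflatT
    rw [h, norm_neg]
    exact hTnorm
  have hsθ : ∀ t : Fin m, θ ≤ ‖s t‖ ∧ ‖s t‖ ≤ θ + 1 := by
    intro t
    obtain ⟨h1, h2⟩ := hblocks (Bs.get t) (List.get_mem Bs t)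
    refine ⟨h1, ?_⟩
    have h3 := h2 (Bs.get t).length
    rwa [take_length] at h3
  -- get the permutation of blocks from the hypothesis
  obtain ⟨π, hπ⟩ : ∃ π : Equiv.Perm (Fin m),
      ∀ j : Fin m, ‖∑ i ∈ Finset.Iic j, s (π i)‖ ≤ (C + 1) / ε := by
    rcases Nat.eq_zero_or_pos m with h0 | hm0
    · exact ⟨1, fun j => absurd j.isLt (by omega)⟩
    · obtain ⟨π, hπ⟩ := hyp m hm0 (fun t => ε • s t) (by
        intro t
        obtain ⟨h1, h2⟩ := hsθ t
        rw [norm_smul, Real.norm_eq_abs, abs_of_pos hε0]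
        constructor
        · nlinarith
        · nlinarith)
      refine ⟨π, fun j => ?_⟩
      have h1 := hπ j
      rw [← Finset.smul_sum, ← Finset.smul_sum] at h1
      have h4 : ‖((((j : ℕ) : ℝ) + 1) / m) • (ε • ∑ i, s i)‖ ≤ 1 - ε := by
        rw [norm_smul, norm_smul, Real.norm_eq_abs, Real.norm_eq_abs,
          abs_of_pos hε0, abs_of_nonneg (by positivity)]
        have hc : (((j : ℕ) : ℝ) + 1) / m ≤ 1 := by
          rw [div_le_one (by exact_mod_cast hm0)]
          exact_mod_cast j.isLt
        have hc0 : (0:ℝ) ≤ (((j : ℕ) : ℝ) + 1) / m := by positivity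
        have hs2 : ‖∑ i, s i‖ ≤ θ := by
          rw [← hflat_eq]
          exact hJnorm
        have h7 : ((((j : ℕ) : ℝ) + 1) / m) * (ε * ‖∑ i, s i‖) ≤ 1 * (ε * θ) :=
          mul_le_mul hc (mul_le_mul_of_nonneg_left hs2 hε0.le) (by positivity) zero_le_one
        linarith
      have h5 : ‖ε • ∑ i ∈ Finset.Iic j, s (π i)‖ ≤ C + (1 - ε) := by
        have h6 := norm_add_le
          (ε • ∑ i ∈ Finset.Iic j, s (π i) - ((((j : ℕ) : ℝ) + 1) / m) • (ε • ∑ i, s i))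
          (((((j : ℕ) : ℝ) + 1) / m) • (ε • ∑ i, s i))
        rw [sub_add_cancel] at h6
        linarith
      rw [norm_smul, Real.norm_eq_abs, abs_of_pos hε0] at h5
      rw [le_div_iff₀ hε0]
      nlinarith [norm_nonneg (∑ i ∈ Finset.Iic j, s (π i))]
  set PB : List (List (Fin n)) := List.ofFn (fun t : Fin m => Bs.get (π t)) with hPBdef
  set l : List (Fin n) := PB.flatten ++ T with hldef
  have hPBmapS : PB.map (fun B => (B.map v).sum) = List.ofFn (fun t => s (π t)) := by
    rw [hPBdef, map_ofFn]
    rfl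
  -- prefix sums of permuted blocks
  have hA : ∀ j, ‖((PB.take j).flatten.map v).sum‖ ≤ (C + 1) / ε := by
    intro j
    have hred : ((PB.take j).flatten.map v).sum
        = ((List.ofFn (fun t => s (π t))).take j).sum := by
      rw [my_map_sum_flatten, map_take, hPBmapS]
    rw [hred]
    rcases Nat.eq_zero_or_pos j with rfl | hj
    · simp
      positivity
    rcases le_or_gt j m with hjm | hjm
    · have hjf : j - 1 < m := by omega
      have hje : j = (⟨j - 1, hjf⟩ : Fin m).val + 1 := by simp; omega
      rw [hje, ← my_sum_Iic_take]
      exact hπ _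
    · have hlen : (List.ofFn (fun t => s (π t))).length = m := by simp
      rw [take_of_length_le (by omega)]
      rcases Nat.eq_zero_or_pos m with h0 | hm0
      · have : (List.ofFn (fun t : Fin m => s (π t))) = [] :=
          eq_nil_of_length_eq_zero (by simp [h0])
        rw [this]
        simp
        positivity
      · have hmf : m - 1 < m := by omega
        have hme : (List.ofFn (fun t => s (π t)))
            = (List.ofFn (fun t => s (π t))).take ((⟨m - 1, hmf⟩ : Fin m).val + 1) := by
          rw [take_of_length_le (by simp; omega)]
        rw [hme, ← my_sum_Iic_take]
        exact hπ _
  -- all prefix sums of the final list are small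
  have hpfx : ∀ k, ‖((l.take k).map v).sum‖ ≤ (C + 2) / ε := by
    intro k
    have hmain := my_flatten_pfx v ((C + 1) / ε) (θ + 1) (by positivity) PB 0
      (fun j => by simpa using hA j)
      (fun B hB k' => by
        rw [hPBdef, List.mem_ofFn] at hB
        obtain ⟨t, rfl⟩ := hB
        exact (hblocks _ (List.get_mem Bs (π t))).2 k')
    rw [hldef, take_append, map_append, sum_append]
    rcases le_or_gt k PB.flatten.length with h | h
    · have h2 : k - PB.flatten.length = 0 := by omega
      rw [h2]
      simp only [take_zero, map_nil, sum_nil, add_zero]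
      have h3 := hmain k
      rw [zero_add] at h3
      have heq : (C + 1) / ε + (θ + 1) = (C + 2) / ε := by
        rw [hθdef]
        field_simp
        ring
      linarith
    · rw [take_of_length_le h.le]
      have hPBsum : (PB.flatten.map v).sum = (Bs.flatten.map v).sum := by
        rw [my_map_sum_flatten, hPBmapS, sum_ofFn, Equiv.sum_comp π s, hflat_eq]
      have hθ2 : θ + θ ≤ (C + 2) / ε := by
        rw [hθdef, ← add_div, div_le_div_iff₀ hε0 hε0]
        nlinarith
      calc ‖(PB.flatten.map v).sum + ((T.take (k - PB.flatten.length)).map v).sum‖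
          ≤ ‖(PB.flatten.map v).sum‖ + ‖((T.take (k - PB.flatten.length)).map v).sum‖ :=
            norm_add_le _ _
        _ ≤ θ + θ := add_le_add (by rw [hPBsum]; exact hJnorm) (htail _)
        _ ≤ (C + 2) / ε := hθ2
  -- l is a permutation of finRange n
  have hPBperm : PB ~ Bs := by
    have h1 : (List.finRange m).map π ~ List.finRange m :=
      List.perm_of_nodup_nodup_toFinset_eq
        ((List.nodup_finRange m).map π.injective)
        (List.nodup_finRange m)
        (by
          ext x
          simp only [List.mem_toFinset, List.mem_map, List.mem_finRange, true_and,
            iff_true]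
          exact ⟨π.symm x, π.apply_symm_apply x⟩)
    have h2 := h1.map Bs.get
    rw [map_map] at h2
    calc PB = (List.finRange m).map (fun t => Bs.get (π t)) := by
          rw [hPBdef, ofFn_eq_map]
      _ ~ (List.finRange m).map Bs.get := by exact h2
      _ = Bs := by rw [← ofFn_eq_map, ofFn_get]
  have hlperm : l ~ List.finRange n := by
    rw [hldef, hsplit]
    exact (my_perm_flatten hPBperm).append_right T
  have hlen : l.length = n := by
    rw [hlperm.length_eq, length_finRange]
  have hnd : l.Nodup := hlperm.nodup_iff.mpr (List.nodup_finRange n)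
  set g : Fin n → Fin n := fun i => l.get (Fin.cast hlen.symm i) with hgdef
  have hginj : Function.Injective g := by
    intro a b hab
    have h1 := (List.nodup_iff_injective_get.mp hnd) hab
    have h2 : ((Fin.cast hlen.symm a) : ℕ) = ((Fin.cast hlen.symm b) : ℕ) := by rw [h1]
    exact Fin.ext h2
  set τ : Equiv.Perm (Fin n) :=
    Equiv.ofBijective g (Finite.injective_iff_bijective.mp hginj) with hτdef
  have key : ∀ k : Fin n, ∑ i ∈ Finset.Iic k, v (τ i) = ((l.take (k.val + 1)).map v).sum := by
    intro k
    rw [my_sum_Iic_take (fun i => v (τ i)) k]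
    have hofn : List.ofFn (fun i : Fin n => v (τ i)) = l.map v := by
      have h2 : List.ofFn (fun i : Fin n => l.get (Fin.cast hlen.symm i)) = l :=
        my_ofFn_get_cast l hlen
      calc List.ofFn (fun i : Fin n => v (τ i))
          = (List.ofFn (fun i : Fin n => l.get (Fin.cast hlen.symm i))).map v := by
            rw [map_ofFn]
            rfl
        _ = l.map v := by rw [h2]
    rw [hofn, ← map_take]
  -- numeric bound
  have hd1 : (1:ℝ) < (d:ℝ) := by exact_mod_cast (by omega : 1 < d)
  have hlog : 0 < Real.log d := Real.log_pos hd1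
  have hlogle : Real.log d ≤ d :=
    le_trans (Real.log_le_sub_one_of_pos (by linarith)) (by linarith)
  have hratio : 1 ≤ (d:ℝ) / Real.log d := (one_le_div hlog).mpr hlogle
  have hsqrt : 1 ≤ Real.sqrt ((d:ℝ) / Real.log d) := Real.one_le_sqrt.mpr hratio
  have hfinal : (C + 2) / ε ≤ (1 / ε) * (C + 200 * Real.sqrt ((d : ℝ) / Real.log d)) := by
    have h1 : (C + 2) / ε = (1 / ε) * (C + 2) := by ring
    rw [h1]
    apply mul_le_mul_of_nonneg_left (by linarith) (by positivity)
  refine ⟨τ, fun k => ?_⟩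
  rw [key k]
  exact le_trans (hpfx (k.val + 1)) hfinal
end

section
/- Let d ≥ 1 be an integer and let B ⊆ ℝ^d be a compact convex set with 0 in its interior; let ‖x‖_B = inf{r ≥ 0 : x ∈ r·B} denote the gauge (Minkowski functional) of B. Then for every positive integer n and every finite list v_1, …, v_n of vectors with v_i ∈ B for all i and ∑_{i=1}^{n} v_i = 0, there exists a permutation π of {1,…,n} such that for every k ∈ {1,…,n}, ‖∑_{i=1}^{k} v_{π(i)}‖_B ≤ d. -/
set_option maxHeartbeats 1000000

open Finset



/-- Feasibility: weights in `[0,1]` supported on `A`, summing to `|A| - d`,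
with vanishing weighted vector sum. -/
def SteinitzFeas (d : ℕ) {n : ℕ} (v : Fin n → EuclideanSpace ℝ (Fin d))
    (A : Finset (Fin n)) (lam : Fin n → ℝ) : Prop :=
  (∀ i, 0 ≤ lam i) ∧ (∀ i, lam i ≤ 1) ∧ (∀ i ∉ A, lam i = 0) ∧
    (∑ i ∈ A, lam i = (A.card : ℝ) - d) ∧ (∑ i ∈ A, lam i • v i = 0)

lemma steinitz_gauge_sum_le {d n : ℕ} {B : Set (EuclideanSpace ℝ (Fin d))}
    (hBconv : Convex ℝ B) (habs : Absorbent ℝ B)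
    {v : Fin n → EuclideanSpace ℝ (Fin d)} (hv : ∀ i, v i ∈ B)
    (A : Finset (Fin n)) (c : Fin n → ℝ) (hc : ∀ i, 0 ≤ c i) :
    gauge B (∑ i ∈ A, c i • v i) ≤ ∑ i ∈ A, c i := by
  classical
  induction A using Finset.induction with
  | empty => simp [gauge_zero]
  | @insert a s ha ih =>
    rw [Finset.sum_insert ha, Finset.sum_insert ha]
    refine (gauge_add_le hBconv habs _ _).trans (add_le_add ?_ ih)
    have h1 : gauge B (c a • v a) = c a * gauge B (v a) := by
      rw [gauge_smul_of_nonneg (hc a)]; rfl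
    rw [h1]
    calc c a * gauge B (v a) ≤ c a * 1 := by
          exact mul_le_mul_of_nonneg_left (gauge_le_one_of_mem (hv a)) (hc a)
      _ = c a := mul_one _



lemma steinitz_feas_gauge {d n : ℕ} {B : Set (EuclideanSpace ℝ (Fin d))}
    (hBconv : Convex ℝ B) (habs : Absorbent ℝ B)
    {v : Fin n → EuclideanSpace ℝ (Fin d)} (hv : ∀ i, v i ∈ B)
    {A : Finset (Fin n)} {lam : Fin n → ℝ} (h : SteinitzFeas d v A lam) :
    gauge B (∑ i ∈ A, v i) ≤ d := by
  obtain ⟨h0, h1, _, hsum, hvec⟩ := h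
  have key : ∑ i ∈ A, v i = ∑ i ∈ A, (1 - lam i) • v i := by
    simp only [sub_smul, one_smul, Finset.sum_sub_distrib, hvec, sub_zero]
  rw [key]
  have := steinitz_gauge_sum_le hBconv habs hv A (fun i => 1 - lam i)
    (fun i => by show 0 ≤ 1 - lam i; linarith [h1 i])
  refine this.trans ?_
  rw [Finset.sum_sub_distrib, Finset.sum_const, hsum, nsmul_eq_mul, mul_one]
  ring_nf
  exact le_refl _


lemma steinitz_reduce {d n : ℕ} (v : Fin n → EuclideanSpace ℝ (Fin d))
    (A : Finset (Fin n)) (hA : d < A.card) :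
    ∀ f : ℕ, ∀ mu : Fin n → ℝ,
      (∀ i, 0 ≤ mu i) → (∀ i, mu i ≤ 1) → (∀ i ∉ A, mu i = 0) →
      (∑ i ∈ A, mu i = (A.card : ℝ) - 1 - d) → (∑ i ∈ A, mu i • v i = 0) →
      ((A.filter fun i => mu i ≠ 0 ∧ mu i ≠ 1).card ≤ f) →
      ∃ j ∈ A, ∃ mu' : Fin n → ℝ,
        (∀ i, 0 ≤ mu' i) ∧ (∀ i, mu' i ≤ 1) ∧ (∀ i ∉ A, mu' i = 0) ∧
        (∑ i ∈ A, mu' i = (A.card : ℝ) - 1 - d) ∧ (∑ i ∈ A, mu' i • v i = 0) ∧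
        mu' j = 0 := by
  classical
  intro f
  induction f with
  | zero =>
    intro mu h0 h1 hsupp hsum hvec hcard
    by_cases hz : ∃ j ∈ A, mu j = 0
    · obtain ⟨j, hj, hj0⟩ := hz
      exact ⟨j, hj, mu, h0, h1, hsupp, hsum, hvec, hj0⟩
    · exfalso
      push_neg at hz
      -- fractional set is empty, so mu is 1 on A
      have hone : ∀ i ∈ A, mu i = 1 := by
        intro i hi
        by_contra hne
        have : i ∈ A.filter fun i => mu i ≠ 0 ∧ mu i ≠ 1 :=
          Finset.mem_filter.2 ⟨hi, hz i hi, hne⟩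
        have := Finset.card_pos.2 ⟨i, this⟩
        omega
      have : ∑ i ∈ A, mu i = (A.card : ℝ) := by
        rw [Finset.sum_congr rfl hone]; simp
      rw [this] at hsum
      have : (1 : ℝ) + d = 0 := by linarith
      have hd : (0:ℝ) ≤ d := Nat.cast_nonneg d
      linarith
  | succ f ih =>
    intro mu h0 h1 hsupp hsum hvec hcard
    by_cases hz : ∃ j ∈ A, mu j = 0
    · obtain ⟨j, hj, hj0⟩ := hz
      exact ⟨j, hj, mu, h0, h1, hsupp, hsum, hvec, hj0⟩
    push_neg at hz
    -- F : fractional set (no zeros, so = {i ∈ A | mu i ≠ 1})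
    set F : Finset (Fin n) := A.filter (fun i => mu i ≠ 1) with hF
    have hFsub : F ⊆ A := Finset.filter_subset _ _
    have hFeq : F = A.filter fun i => mu i ≠ 0 ∧ mu i ≠ 1 := by
      apply Finset.filter_congr
      intro i hi
      simp [hz i hi]
    have hFcard : F.card ≤ f + 1 := by rw [hFeq]; exact hcard
    have hmuF : ∀ i ∈ F, 0 < mu i ∧ mu i < 1 := by
      intro i hi
      have hiA := hFsub hi
      have := Finset.mem_filter.1 hi
      exact ⟨lt_of_le_of_ne (h0 i) (Ne.symm (hz i hiA)), lt_of_le_of_ne (h1 i) this.2⟩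
    -- mu = 1 off F (within A)
    have hone : ∀ i ∈ A, i ∉ F → mu i = 1 := by
      intro i hi hniF
      by_contra hne
      exact hniF (Finset.mem_filter.2 ⟨hi, hne⟩)
    -- sum over F
    have hsumsplit : ∑ i ∈ A, mu i = ∑ i ∈ F, mu i + ((A.card : ℝ) - F.card) := by
      rw [← Finset.sum_sdiff hFsub]
      have : ∑ i ∈ A \ F, mu i = ((A \ F).card : ℝ) := by
        rw [Finset.sum_congr rfl (fun i hi => by
          obtain ⟨hiA, hniF⟩ := Finset.mem_sdiff.1 hi
          exact hone i hiA hniF)]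
        simp
      rw [this, Finset.card_sdiff_of_subset hFsub]
      have := Finset.card_le_card hFsub
      push_cast [Nat.cast_sub this]
      ring
    have hFsum : ∑ i ∈ F, mu i = (F.card : ℝ) - 1 - d := by
      rw [hsumsplit] at hsum; linarith
    -- F is large: card F ≥ d + 2
    have hFne : F.Nonempty := by
      rcases Finset.eq_empty_or_nonempty F with h | h
      · exfalso
        rw [h] at hFsum
        simp at hFsum
        have hd : (0:ℝ) ≤ d := Nat.cast_nonneg d
        linarith
      · exact h
    have hFlt : ∑ i ∈ F, mu i < (F.card : ℝ) := by
      calc ∑ i ∈ F, mu i < ∑ _i ∈ F, (1:ℝ) :=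
            Finset.sum_lt_sum_of_nonempty hFne (fun i hi => (hmuF i hi).2)
        _ = (F.card : ℝ) := by simp
    have hFgt : (0:ℝ) < ∑ i ∈ F, mu i :=
      Finset.sum_pos (fun i hi => (hmuF i hi).1) hFne
    have hFbig : d + 1 < F.card := by
      have : (d : ℝ) + 1 < (F.card : ℝ) := by linarith
      exact_mod_cast this
    -- linear algebra: find nonzero c in kernel
    set T := Fintype.linearCombination ℝ
      (fun i : ↥F => ((v i.1, (1:ℝ)) : EuclideanSpace ℝ (Fin d) × ℝ)) with hT
    have hnotinj : ¬ Function.Injective T := by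
      intro hinj
      have := LinearMap.finrank_le_finrank_of_injective hinj
      rw [Module.finrank_fintype_fun_eq_card, Fintype.card_coe,
        Module.finrank_prod, finrank_euclideanSpace_fin, Module.finrank_self] at this
      omega
    obtain ⟨c1, c2, hc12, hcne⟩ : ∃ a b, T a = T b ∧ a ≠ b := by
      by_contra h
      push_neg at h
      exact hnotinj (fun a b hab => h a b hab)
    set c : ↥F → ℝ := c1 - c2 with hc
    have hc0 : T c = 0 := by rw [hc, map_sub, hc12, sub_self]
    have hcnz : c ≠ 0 := sub_ne_zero.2 hcne
    -- extend to w : Fin n → ℝ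
    set w : Fin n → ℝ := fun i => if h : i ∈ F then c ⟨i, h⟩ else 0 with hw
    have hw_off : ∀ i ∉ F, w i = 0 := fun i hi => dif_neg hi
    have hw_on : ∀ (i : ↥F), w i.1 = c i := by
      intro i
      simp only [hw]
      rw [dif_pos i.2]
    have hTc : (∑ i : ↥F, c i • v i.1 = 0) ∧ (∑ i : ↥F, c i = 0) := by
      have := hc0
      rw [hT, Fintype.linearCombination_apply] at this
      constructor
      · have := congrArg Prod.fst this
        rw [Prod.fst_sum] at this
        simpa using this
      · have := congrArg Prod.snd this
        rw [Prod.snd_sum] at this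
        simpa [smul_eq_mul] using this
    have hwsum : ∑ i ∈ F, w i = 0 := by
      rw [← Finset.sum_coe_sort F w]
      rw [Finset.sum_congr rfl (fun i _ => hw_on i)]
      exact hTc.2
    have hwvec : ∑ i ∈ F, w i • v i = 0 := by
      rw [← Finset.sum_coe_sort F (fun i => w i • v i)]
      rw [Finset.sum_congr rfl (fun i _ => by rw [hw_on i])]
      exact hTc.1
    have hwsumA : ∑ i ∈ A, w i = 0 := by
      rw [← Finset.sum_subset hFsub (fun i _ hni => hw_off i hni)]
      exact hwsum
    have hwvecA : ∑ i ∈ A, w i • v i = 0 := by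
      rw [← Finset.sum_subset hFsub (fun i _ hni => by rw [hw_off i hni, zero_smul])]
      exact hwvec
    -- pick the step size
    set S : Finset (Fin n) := F.filter (fun i => w i ≠ 0) with hS
    have hSne : S.Nonempty := by
      obtain ⟨i, hi⟩ := Function.ne_iff.1 hcnz
      exact ⟨i.1, Finset.mem_filter.2 ⟨i.2, by rw [hw_on i]; simpa using hi⟩⟩
    set b : Fin n → ℝ := fun i => if 0 < w i then (1 - mu i) / w i else mu i / (-w i) with hb
    have hbpos : ∀ i ∈ S, 0 < b i := by
      intro i hi
      obtain ⟨hiF, hwne⟩ := Finset.mem_filter.1 hi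
      obtain ⟨hm0, hm1⟩ := hmuF i hiF
      by_cases hpos : 0 < w i
      · simp only [hb, if_pos hpos]
        exact div_pos (by linarith) hpos
      · have hneg : w i < 0 := lt_of_le_of_ne (not_lt.1 hpos) hwne
        simp only [hb, if_neg hpos]
        exact div_pos hm0 (by linarith)
    obtain ⟨i0, hi0S, hti0⟩ := Finset.exists_mem_eq_inf' hSne b
    set t : ℝ := S.inf' hSne b with ht
    have htpos : 0 < t := hti0 ▸ hbpos i0 hi0S
    have htle : ∀ i ∈ S, t ≤ b i := fun i hi => Finset.inf'_le b hi
    set mu' : Fin n → ℝ := fun i => mu i + t * w i with hmu'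
    -- bounds for mu'
    have hbounds : ∀ i, 0 ≤ mu' i ∧ mu' i ≤ 1 := by
      intro i
      by_cases hiF : i ∈ F
      · by_cases hwz : w i = 0
        · simp only [hmu', hwz, mul_zero, add_zero]
          exact ⟨h0 i, h1 i⟩
        · have hiS : i ∈ S := Finset.mem_filter.2 ⟨hiF, hwz⟩
          obtain ⟨hm0, hm1⟩ := hmuF i hiF
          have hti := htle i hiS
          by_cases hpos : 0 < w i
          · have hbi : b i = (1 - mu i) / w i := by simp only [hb, if_pos hpos]
            constructor
            · have : 0 ≤ t * w i := le_of_lt (mul_pos htpos hpos)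
              simp only [hmu']; linarith
            · have : t * w i ≤ b i * w i :=
                mul_le_mul_of_nonneg_right hti (le_of_lt hpos)
              rw [hbi, div_mul_cancel₀ _ (ne_of_gt hpos)] at this
              simp only [hmu']; linarith
          · have hneg : w i < 0 := lt_of_le_of_ne (not_lt.1 hpos) hwz
            have hbi : b i = mu i / (-w i) := by simp only [hb, if_neg hpos]
            constructor
            · have : b i * w i ≤ t * w i :=
                mul_le_mul_of_nonpos_right hti (le_of_lt hneg)
              have hbw : b i * w i = -(mu i) := by
                rw [hbi, div_mul_eq_mul_div, div_neg, mul_div_assoc, div_self hwz, mul_one]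
              rw [hbw] at this
              simp only [hmu']; linarith
            · have : t * w i ≤ 0 := le_of_lt (mul_neg_of_pos_of_neg htpos hneg)
              simp only [hmu']; linarith
      · simp only [hmu', hw_off i hiF, mul_zero, add_zero]
        exact ⟨h0 i, h1 i⟩
    -- the coordinate i0 becomes 0 or 1
    have hi0F : i0 ∈ F := (Finset.mem_filter.1 hi0S).1
    have hi0w : w i0 ≠ 0 := (Finset.mem_filter.1 hi0S).2
    have hi0val : mu' i0 = 0 ∨ mu' i0 = 1 := by
      by_cases hpos : 0 < w i0
      · right
        simp only [hmu', hti0, hb, if_pos hpos, div_mul_cancel₀ _ (ne_of_gt hpos)]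
        ring
      · left
        have hneg : w i0 < 0 := lt_of_le_of_ne (not_lt.1 hpos) hi0w
        simp only [hmu', hti0, hb, if_neg hpos]
        rw [div_mul_eq_mul_div, div_neg, mul_div_assoc, div_self hi0w, mul_one]
        ring
    -- mu' satisfies the constraints
    have hsupp' : ∀ i ∉ A, mu' i = 0 := by
      intro i hi
      simp only [hmu', hsupp i hi, hw_off i (fun hiF => hi (hFsub hiF)), mul_zero, add_zero]
    have hsum' : ∑ i ∈ A, mu' i = (A.card : ℝ) - 1 - d := by
      simp only [hmu', Finset.sum_add_distrib, ← Finset.mul_sum, hwsumA, mul_zero, add_zero, hsum]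
    have hvec' : ∑ i ∈ A, mu' i • v i = 0 := by
      have : ∀ i, mu' i • v i = mu i • v i + t • (w i • v i) := by
        intro i
        simp only [hmu', add_smul, smul_smul]
      simp only [this, Finset.sum_add_distrib, ← Finset.smul_sum, hwvecA, smul_zero,
        add_zero, hvec]
    -- fractional count decreased
    have hfrac' : (A.filter fun i => mu' i ≠ 0 ∧ mu' i ≠ 1) ⊆ F.erase i0 := by
      intro i hi
      obtain ⟨hiA, hi0', hi1'⟩ := Finset.mem_filter.1 hi
      have hiF : i ∈ F := by
        by_contra hniF
        have := hone i hiA hniF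
        have hwz := hw_off i hniF
        exact hi1'.elim (by simp only [hmu', this, hwz, mul_zero, add_zero])
      refine Finset.mem_erase.2 ⟨?_, hiF⟩
      rintro rfl
      rcases hi0val with h | h
      · exact hi0'.elim h
      · exact hi1'.elim h
    have hfc : (A.filter fun i => mu' i ≠ 0 ∧ mu' i ≠ 1).card ≤ f := by
      have h1 := Finset.card_le_card hfrac'
      have h2 := Finset.card_erase_of_mem hi0F
      omega
    exact ih mu' (fun i => (hbounds i).1) (fun i => (hbounds i).2) hsupp' hsum' hvec' hfc



lemma steinitz_step {d n : ℕ} {v : Fin n → EuclideanSpace ℝ (Fin d)}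
    {A : Finset (Fin n)} {lam : Fin n → ℝ}
    (h : SteinitzFeas d v A lam) (hA : d < A.card) :
    ∃ j ∈ A, ∃ mu : Fin n → ℝ, SteinitzFeas d v (A.erase j) mu := by
  classical
  obtain ⟨h0, h1, hsupp, hsum, hvec⟩ := h
  set r : ℝ := ((A.card : ℝ) - 1 - d) / ((A.card : ℝ) - d) with hr
  have hdenom : (0:ℝ) < (A.card : ℝ) - d := by
    have : (d:ℝ) < (A.card : ℝ) := by exact_mod_cast hA
    linarith
  have hnum : (0:ℝ) ≤ (A.card : ℝ) - 1 - d := by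
    have : (d:ℝ) + 1 ≤ (A.card : ℝ) := by exact_mod_cast hA
    linarith
  have hr0 : 0 ≤ r := div_nonneg hnum (le_of_lt hdenom)
  have hr1 : r ≤ 1 := by
    rw [hr, div_le_one hdenom]; linarith
  set mu0 : Fin n → ℝ := fun i => r * lam i with hmu0
  obtain ⟨j, hj, mu', hb0, hb1, hsupp', hsum', hvec', hj0⟩ :=
    steinitz_reduce v A hA A.card mu0
      (fun i => mul_nonneg hr0 (h0 i))
      (fun i => by
        calc r * lam i ≤ 1 * 1 := mul_le_mul hr1 (h1 i) (h0 i) zero_le_one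
          _ = 1 := mul_one 1)
      (fun i hi => by simp [hmu0, hsupp i hi])
      (by
        simp only [hmu0, ← Finset.mul_sum, hsum, hr]
        rw [div_mul_cancel₀ _ (ne_of_gt hdenom)])
      (by
        have : ∀ i, (r * lam i) • v i = r • (lam i • v i) := fun i => by
          rw [smul_smul]
        simp only [hmu0, this, ← Finset.smul_sum, hvec, smul_zero])
      (Finset.card_le_card (Finset.filter_subset _ _))
  refine ⟨j, hj, mu', hb0, hb1, ?_, ?_, ?_⟩
  · intro i hi
    by_cases hij : i = j
    · exact hij ▸ hj0
    · exact hsupp' i (fun hiA => hi (Finset.mem_erase.2 ⟨hij, hiA⟩))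
  · have hsplit : ∑ i ∈ A, mu' i = ∑ i ∈ A.erase j, mu' i + mu' j :=
      (Finset.sum_erase_add A _ hj).symm
    rw [hj0, add_zero] at hsplit
    rw [← hsplit, hsum', Finset.card_erase_of_mem hj]
    have h1A : 1 ≤ A.card := by omega
    push_cast [Nat.cast_sub h1A]
    ring
  · have hsplit : ∑ i ∈ A, mu' i • v i = ∑ i ∈ A.erase j, mu' i • v i + mu' j • v j :=
      (Finset.sum_erase_add A _ hj).symm
    rw [hj0, zero_smul, add_zero] at hsplit
    rw [← hsplit, hvec']





lemma steinitz_chain {d n : ℕ} {B : Set (EuclideanSpace ℝ (Fin d))}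
    (hBconv : Convex ℝ B) (habs : Absorbent ℝ B)
    {v : Fin n → EuclideanSpace ℝ (Fin d)} (hv : ∀ i, v i ∈ B) :
    ∀ m : ℕ, ∀ A : Finset (Fin n), A.card = m →
      (m ≤ d ∨ ∃ lam, SteinitzFeas d v A lam) →
      ∃ C : ℕ → Finset (Fin n), C m = A ∧ (∀ k ≤ m, (C k).card = k) ∧
        (∀ k < m, C k ⊆ C (k + 1)) ∧ (∀ k ≤ m, gauge B (∑ i ∈ C k, v i) ≤ d) := by
  classical
  intro m
  induction m with
  | zero =>
    intro A hcard _
    refine ⟨fun _ => ∅, (Finset.card_eq_zero.1 hcard).symm, ?_, ?_, ?_⟩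
    · intro k hk; interval_cases k; simp
    · intro k hk; omega
    · intro k hk; interval_cases k
      simp only [Finset.sum_empty, gauge_zero]
      exact Nat.cast_nonneg d
  | succ m ih =>
    intro A hcard hpred
    -- get gauge bound for A, and an element to remove with the invariant
    have hstep : gauge B (∑ i ∈ A, v i) ≤ d ∧
        ∃ j ∈ A, (m ≤ d ∨ ∃ mu, SteinitzFeas d v (A.erase j) mu) := by
      by_cases hmd : m + 1 ≤ d
      · constructor
        · have hg := steinitz_gauge_sum_le hBconv habs hv A (fun _ => 1)
            (fun _ => zero_le_one)
          simp only [one_smul, Finset.sum_const, nsmul_eq_mul, mul_one] at hg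
          refine hg.trans ?_
          rw [hcard]
          exact_mod_cast Nat.le_of_succ_le_succ (Nat.succ_le_succ hmd)
        · obtain ⟨j, hj⟩ := Finset.card_pos.1 (by omega : 0 < A.card)
          exact ⟨j, hj, Or.inl (by omega)⟩
      · have hfeas : ∃ lam, SteinitzFeas d v A lam := by
          rcases hpred with h | h
          · omega
          · exact h
        obtain ⟨lam, hlam⟩ := hfeas
        have hdA : d < A.card := by omega
        obtain ⟨j, hj, mu, hmu⟩ := steinitz_step hlam hdA
        exact ⟨steinitz_feas_gauge hBconv habs hv hlam, j, hj, Or.inr ⟨mu, hmu⟩⟩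
    obtain ⟨hgA, j, hj, hpred'⟩ := hstep
    have hcard' : (A.erase j).card = m := by
      rw [Finset.card_erase_of_mem hj, hcard]
      omega

    obtain ⟨C', hC'm, hC'card, hC'sub, hC'gauge⟩ := ih (A.erase j) hcard' hpred'
    refine ⟨fun k => if k = m + 1 then A else C' k, by simp, ?_, ?_, ?_⟩
    · intro k hk
      by_cases h : k = m + 1
      · simp [h, hcard]
      · simp only [if_neg h]
        exact hC'card k (by omega)
    · intro k hk
      by_cases h : k + 1 = m + 1
      · have hkm : k = m := by omega
        subst hkm
        simp only []
        rw [if_neg (by omega : k ≠ k + 1)]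
        simp only [if_pos trivial, eq_self_iff_true, if_true, hC'm]
        exact Finset.erase_subset j A
      · simp only [if_neg h, if_neg (by omega : k ≠ m + 1)]
        exact hC'sub k (by omega)
    · intro k hk
      by_cases h : k = m + 1
      · simpa [h] using hgA
      · simp only [if_neg h]
        exact hC'gauge k (by omega)



/-- The Steinitz Lemma for general norms: for any convex body `B ⊆ ℝ^d` with `0`
in its interior, any finite zero-sum family of vectors from `B` can be ordered so
that every partial sum has gauge (Minkowski functional) at most `d`. -/
theorem steinitz_lemma_general_norms
    (d : ℕ) (hd : 1 ≤ d) (B : Set (EuclideanSpace ℝ (Fin d)))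
    (hBcompact : IsCompact B) (hBconv : Convex ℝ B) (h0B : (0 : EuclideanSpace ℝ (Fin d)) ∈ interior B)
    (n : ℕ) (hn : 0 < n) (v : Fin n → EuclideanSpace ℝ (Fin d))
    (hv : ∀ i, v i ∈ B) (hsum : (∑ i, v i) = 0) :
    ∃ π : Equiv.Perm (Fin n), ∀ k : Fin n,
      gauge B (∑ i ∈ Finset.Iic k, v (π i)) ≤ (d : ℝ) := by
  classical
  have habs : Absorbent ℝ B := absorbent_nhds_zero (mem_interior_iff_mem_nhds.1 h0B)
  have hcardu : (Finset.univ : Finset (Fin n)).card = n := by simp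
  have hpred : n ≤ d ∨ ∃ lam, SteinitzFeas d v (Finset.univ : Finset (Fin n)) lam := by
    by_cases hnd : n ≤ d
    · exact Or.inl hnd
    · right
      push_neg at hnd
      refine ⟨fun _ => ((n : ℝ) - d) / n, ?_, ?_, ?_, ?_, ?_⟩
      · intro i
        apply div_nonneg _ (Nat.cast_nonneg n)
        have : (d:ℝ) < n := by exact_mod_cast hnd
        linarith
      · intro i
        rw [div_le_one (by exact_mod_cast hn : (0:ℝ) < n)]
        have : (0:ℝ) ≤ d := Nat.cast_nonneg d
        linarith
      · intro i hi; exact absurd (Finset.mem_univ i) hi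
      · rw [Finset.sum_const, hcardu, nsmul_eq_mul,
          mul_div_cancel₀ _ (by exact_mod_cast hn.ne' : (n:ℝ) ≠ 0)]
      · rw [← Finset.smul_sum, hsum, smul_zero]
  obtain ⟨C, hCn, hCcard, hCsub, hCgauge⟩ :=
    steinitz_chain hBconv habs hv n Finset.univ hcardu hpred
  -- monotonicity of the chain
  have hmono : ∀ k l, k ≤ l → l ≤ n → C k ⊆ C l := by
    intro k l hkl hln
    induction l with
    | zero => have : k = 0 := by omega
              exact this ▸ subset_rfl
    | succ l ihl =>
      rcases Nat.lt_or_ge k (l + 1) with h | h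
      · exact (ihl (by omega) (by omega)).trans (hCsub l (by omega))
      · have : k = l + 1 := by omega
        exact this ▸ subset_rfl
  -- the new element at each step
  have hdiff : ∀ k, k < n → ∃ a, C (k + 1) \ C k = {a} := by
    intro k hk
    apply Finset.card_eq_one.1
    rw [Finset.card_sdiff_of_subset (hCsub k hk), hCcard (k+1) (by omega), hCcard k (by omega)]
    omega
  choose a ha using hdiff
  have haIn : ∀ k (hk : k < n), a k hk ∈ C (k + 1) ∧ a k hk ∉ C k := by
    intro k hk
    have : a k hk ∈ C (k + 1) \ C k := by rw [ha k hk]; exact Finset.mem_singleton_self _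
    exact ⟨(Finset.mem_sdiff.1 this).1, (Finset.mem_sdiff.1 this).2⟩
  set σ : Fin n → Fin n := fun k => a k.1 k.2 with hσ
  have hinj : Function.Injective σ := by
    intro k l hkl
    by_contra hne
    have hne' : k.1 ≠ l.1 := fun h => hne (Fin.ext h)
    rcases Nat.lt_or_ge k.1 l.1 with h | h
    · have h1 : σ k ∈ C (k.1 + 1) := (haIn k.1 k.2).1
      have h2 : σ l ∉ C l.1 := (haIn l.1 l.2).2
      have : σ k ∈ C l.1 := hmono (k.1 + 1) l.1 (by omega) (by omega) h1
      rw [hkl] at this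
      exact h2 this
    · have h : l.1 < k.1 := by omega
      have h1 : σ l ∈ C (l.1 + 1) := (haIn l.1 l.2).1
      have h2 : σ k ∉ C k.1 := (haIn k.1 k.2).2
      have : σ l ∈ C k.1 := hmono (l.1 + 1) k.1 (by omega) (by omega) h1
      rw [← hkl] at this
      exact h2 this
  refine ⟨Equiv.ofBijective σ ((Finite.injective_iff_bijective).1 hinj), ?_⟩
  intro k
  have hπ : ∀ i, (Equiv.ofBijective σ ((Finite.injective_iff_bijective).1 hinj)) i = σ i :=
    fun i => rfl
  have himage : Finset.image σ (Finset.Iic k) = C (k.1 + 1) := by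
    apply Finset.eq_of_subset_of_card_le
    · intro x hx
      obtain ⟨i, hi, hix⟩ := Finset.mem_image.1 hx
      have hik : i ≤ k := Finset.mem_Iic.1 hi
      have : σ i ∈ C (i.1 + 1) := (haIn i.1 i.2).1
      exact hix ▸ hmono (i.1 + 1) (k.1 + 1) (by omega) (by omega) this
    · rw [Finset.card_image_of_injective _ hinj, Fin.card_Iic,
        hCcard (k.1 + 1) (by omega)]
  have hsum' : ∑ i ∈ Finset.Iic k, v (σ i) = ∑ j ∈ C (k.1 + 1), v j := by
    rw [← himage, Finset.sum_image (fun x _ y _ h => hinj h)]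
  simp only [hπ]
  rw [hsum']
  exact hCgauge (k.1 + 1) (by omega)
end

section
/- Let d ≥ 1 be an integer and let 0 < ε < 1 and 0 < t < 1 be real numbers. Then every finite multiset V of vectors in ℝ^d of Euclidean norm at most 1 can be partitioned as V = V_1 ∪ … ∪ V_m ∪ R (a disjoint union of sub-multisets, where m ≥ 0) such that: (i) for each α ∈ {1,…,m} there exists a unit vector u_α ∈ S^{d−1} with ⟨v, u_α⟩ ≥ t·|v| for every v ∈ V_α; (ii) for each α ∈ {1,…,m}, 1/ε − 1 ≤ |Σ(V_α)| ≤ 1/ε; and (iii) for every unit vector u ∈ S^{d−1} and every sub-multiset S ⊆ R, the sum of those elements v of S satisfying ⟨v, u⟩ ≥ t·|v| has Euclidean norm strictly less than 1/ε. -/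
open scoped Classical

/-- Partition of a multiset of vectors of norm at most 1 into ball-cone pieces
`V_1, …, V_m` (each contained in a ball-cone `K_t(u_α)` and with sum of norm in
`[1/ε - 1, 1/ε]`) and a remainder `R` such that for every unit vector `u` and
every sub-multiset `S ⊆ R`, the sum of the elements of `S` lying in `K_t(u)`
has norm strictly less than `1/ε`. -/
theorem exists_cone_partition
    (d : ℕ) (hd : 1 ≤ d) (ε t : ℝ) (hε0 : 0 < ε) (hε1 : ε < 1) (ht0 : 0 < t) (ht1 : t < 1)
    (V : Multiset (EuclideanSpace ℝ (Fin d))) (hV : ∀ v ∈ V, ‖v‖ ≤ 1) :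
    ∃ (m : ℕ) (W : Fin m → Multiset (EuclideanSpace ℝ (Fin d)))
      (R : Multiset (EuclideanSpace ℝ (Fin d))),
      V = (∑ α, W α) + R ∧
      (∀ α, ∃ u : EuclideanSpace ℝ (Fin d), ‖u‖ = 1 ∧
        ∀ v ∈ W α, t * ‖v‖ ≤ (inner ℝ v u : ℝ)) ∧
      (∀ α, 1 / ε - 1 ≤ ‖(W α).sum‖ ∧ ‖(W α).sum‖ ≤ 1 / ε) ∧
      (∀ u : EuclideanSpace ℝ (Fin d), ‖u‖ = 1 → ∀ S ≤ R,
        ‖(S.filter (fun v => t * ‖v‖ ≤ (inner ℝ v u : ℝ))).sum‖ < 1 / ε) := by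
  have hεinv : (1:ℝ) < 1 / ε := by rw [lt_div_iff₀ hε0]; linarith
  revert hV
  induction V using Multiset.strongInductionOn with
  | ih V ih =>
  intro hV
  by_cases hbase : ∀ u : EuclideanSpace ℝ (Fin d), ‖u‖ = 1 → ∀ S ≤ V,
      ‖(S.filter (fun v => t * ‖v‖ ≤ (inner ℝ v u : ℝ))).sum‖ < 1 / ε
  · exact ⟨0, Fin.elim0, V, by simp, fun α => α.elim0, fun α => α.elim0, hbase⟩
  · push_neg at hbase
    obtain ⟨u, hu, S, hSV, hS⟩ := hbase
    set P := fun v : EuclideanSpace ℝ (Fin d) => t * ‖v‖ ≤ (inner ℝ v u : ℝ) with hP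
    set W₀ := S.filter P with hW₀def
    clear_value W₀
    have hW₀V : W₀ ≤ V := by rw [hW₀def]; exact (Multiset.filter_le _ _).trans hSV
    have hW₀ne : W₀ ≠ 0 := by
      intro h
      rw [h] at hS
      simp at hS
      linarith
    -- the finset of sub-multisets of W₀ with sum of norm ≤ 1/ε
    set F : Finset (Multiset (EuclideanSpace ℝ (Fin d))) :=
      W₀.powerset.toFinset.filter (fun T => ‖T.sum‖ ≤ 1 / ε) with hFdef
    have memF : ∀ T, T ∈ F ↔ (T ≤ W₀ ∧ ‖T.sum‖ ≤ 1 / ε) := by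
      intro T
      simp [hFdef, Multiset.mem_powerset]
    have hFne : F.Nonempty := ⟨0, (memF 0).mpr ⟨zero_le, by simp; linarith⟩⟩
    obtain ⟨T, hTF, hTmax⟩ := F.exists_max_image Multiset.card hFne
    obtain ⟨hTW₀, hTle⟩ := (memF T).mp hTF
    have hTV : T ≤ V := hTW₀.trans hW₀V
    -- T is nonempty
    obtain ⟨v₀, hv₀⟩ := Multiset.exists_mem_of_ne_zero hW₀ne
    have hsingF : ({v₀} : Multiset _) ∈ F := by
      refine (memF _).mpr ⟨Multiset.singleton_le.mpr hv₀, ?_⟩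
      have h1 := hV v₀ (Multiset.mem_of_le hW₀V hv₀)
      have h2 : (1:ℝ) ≤ ε⁻¹ := by rw [← one_div]; linarith
      simp
      linarith
    have hTne : T ≠ 0 := by
      intro h
      have := hTmax _ hsingF
      simp [h] at this
    -- lower bound on ‖T.sum‖
    have hTlb : 1 / ε - 1 ≤ ‖T.sum‖ := by
      by_cases hrem : W₀ - T = 0
      · have : W₀ ≤ T := tsub_eq_zero_iff_le.mp hrem
        have hTeq : T = W₀ := le_antisymm hTW₀ this
        rw [hTeq]
        linarith
      · obtain ⟨w, hw⟩ := Multiset.exists_mem_of_ne_zero hrem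
        have hwcount : T.count w < W₀.count w := by
          have := Multiset.count_pos.mpr hw
          rw [Multiset.count_sub] at this
          omega
        have hconsle : w ::ₘ T ≤ W₀ := by
          rw [Multiset.le_iff_count]
          intro a
          rw [Multiset.count_cons]
          by_cases ha : a = w
          · subst ha; simpa using hwcount
          · simp [ha]
            exact Multiset.le_iff_count.mp hTW₀ a
        have hnotF : (w ::ₘ T) ∉ F := by
          intro hmem
          have := hTmax _ hmem
          simp at this
        have hbig : 1 / ε < ‖(w ::ₘ T).sum‖ := by
          by_contra hle
          push_neg at hle
          exact hnotF ((memF _).mpr ⟨hconsle, hle⟩)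
        have hwnorm : ‖w‖ ≤ 1 := hV w (Multiset.mem_of_le hW₀V (Multiset.mem_of_le tsub_le_self hw))
        have : ‖(w ::ₘ T).sum‖ ≤ ‖w‖ + ‖T.sum‖ := by
          rw [Multiset.sum_cons]
          exact norm_add_le _ _
        linarith
    -- T is in the cone of u
    have hTcone : ∀ v ∈ T, t * ‖v‖ ≤ (inner ℝ v u : ℝ) := by
      intro v hv
      have : v ∈ W₀ := Multiset.mem_of_le hTW₀ hv
      rw [hW₀def] at this
      exact (Multiset.mem_filter.mp this).2
    -- recurse on V - T
    have hcard : (V - T).card < V.card := by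
      rw [Multiset.card_sub hTV]
      have h1 : 0 < T.card := Multiset.card_pos.mpr hTne
      have h2 : T.card ≤ V.card := Multiset.card_le_card hTV
      omega
    have hlt : V - T < V :=
      lt_of_le_of_ne tsub_le_self (fun h => by rw [h] at hcard; omega)
    obtain ⟨m, W, R, hsum, hcone, hbnd, hrem⟩ :=
      ih (V - T) hlt (fun v hv => hV v (Multiset.mem_of_le tsub_le_self hv))
    refine ⟨m + 1, Fin.cons T W, R, ?_, ?_, ?_, hrem⟩
    · rw [Fin.sum_cons]
      have : V = T + (V - T) := (add_tsub_cancel_of_le hTV).symm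
      rw [this, hsum, add_assoc]
    · intro α
      refine Fin.cases ?_ ?_ α
      · exact ⟨u, hu, by simpa using hTcone⟩
      · intro i
        simpa using hcone i
    · intro α
      refine Fin.cases ?_ ?_ α
      · exact ⟨by simpa using hTlb, by simpa using hTle⟩
      · intro i
        simpa using hbnd i
end

section
/- Let d ≥ 2 be an integer, let 0 < t < 1 and M ≥ 0 be real numbers, and let R be a finite multiset of vectors in ℝ^d of Euclidean norm at most 1. Suppose that for every unit vector u ∈ S^{d−1} and every sub-multiset S ⊆ R, the sum of those elements v of S satisfying ⟨v, u⟩ ≥ t·|v| has Euclidean norm at most M. Then for every sub-multiset S ⊆ R, |Σ(S)| ≤ M / σ_t. -/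
open scoped Classical

/-- The normalized surface measure of the spherical cap
`C_t(u) = {w ∈ S^{d-1} : ⟨w, u⟩ ≥ t}` on the Euclidean unit sphere in `ℝ^d`. -/
noncomputable def capSigma (d : ℕ) (t : ℝ) (u : EuclideanSpace ℝ (Fin d)) : ℝ :=
  (((MeasureTheory.volume : MeasureTheory.Measure (EuclideanSpace ℝ (Fin d))).toSphere
      {w : Metric.sphere (0 : EuclideanSpace ℝ (Fin d)) 1 |
        t ≤ (inner ℝ (w : EuclideanSpace ℝ (Fin d)) u : ℝ)}) /
    ((MeasureTheory.volume : MeasureTheory.Measure (EuclideanSpace ℝ (Fin d))).toSphere Set.univ)).toReal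

open MeasureTheory Metric Set
open scoped Pointwise RealInnerProductSpace ENNReal NNReal

namespace ConeAux
variable {d : ℕ}

/-- cap on the unit sphere -/
noncomputable def capS (d : ℕ) (t : ℝ) (w : EuclideanSpace ℝ (Fin d)) :
    Set (sphere (0 : EuclideanSpace ℝ (Fin d)) 1) :=
  {x | t ≤ ⟪(x : EuclideanSpace ℝ (Fin d)), w⟫}

noncomputable def coneS (d : ℕ) (t : ℝ) (w : EuclideanSpace ℝ (Fin d)) : Set (EuclideanSpace ℝ (Fin d)) :=
  {x | ‖x‖ < 1 ∧ x ≠ 0 ∧ t * ‖x‖ ≤ ⟪x, w⟫}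

lemma capS_meas (t : ℝ) (w : EuclideanSpace ℝ (Fin d)) : MeasurableSet (capS d t w) := by
  have h : Continuous fun x : sphere (0 : EuclideanSpace ℝ (Fin d)) 1 =>
      ⟪(x : EuclideanSpace ℝ (Fin d)), w⟫ :=
    Continuous.inner continuous_subtype_val continuous_const
  exact (isClosed_Ici.preimage h).measurableSet

lemma coneS_meas (t : ℝ) (w : EuclideanSpace ℝ (Fin d)) : MeasurableSet (coneS d t w) := by
  have h1 : Continuous fun x : EuclideanSpace ℝ (Fin d) => ⟪x, w⟫ :=
    Continuous.inner continuous_id continuous_const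
  have : coneS d t w = {x : EuclideanSpace ℝ (Fin d) | ‖x‖ < 1} ∩ ({0}ᶜ)
      ∩ {x | t * ‖x‖ ≤ ⟪x, w⟫} := by
    ext x; simp [coneS, and_assoc]
  rw [this]
  refine (((isOpen_lt continuous_norm continuous_const).measurableSet.inter
    (measurableSet_singleton 0).compl).inter ?_)
  exact (isClosed_le (continuous_const.mul continuous_norm) h1).measurableSet

lemma cone_eq (t : ℝ) (w : EuclideanSpace ℝ (Fin d)) :
    Ioo (0 : ℝ) 1 • ((↑) '' capS d t w) = coneS d t w := by
  ext x
  constructor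
  · intro hx
    rcases Set.mem_smul.1 hx with ⟨r, hr, y, ⟨z, hz, rfl⟩, rfl⟩
    have hz1 : ‖(z : EuclideanSpace ℝ (Fin d))‖ = 1 := norm_eq_of_mem_sphere z
    have hnorm : ‖r • (z : EuclideanSpace ℝ (Fin d))‖ = r := by
      rw [norm_smul, hz1, mul_one, Real.norm_eq_abs, abs_of_pos hr.1]
    refine ⟨by rw [hnorm]; exact hr.2, ?_, ?_⟩
    · intro h0
      rw [h0, norm_zero] at hnorm
      exact hr.1.ne hnorm
    · rw [hnorm, real_inner_smul_left]
      calc t * r = r * t := mul_comm _ _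
      _ ≤ r * ⟪(z : EuclideanSpace ℝ (Fin d)), w⟫ :=
        mul_le_mul_of_nonneg_left hz hr.1.le
  · rintro ⟨h1, h2, h3⟩
    have hx0 : (0 : ℝ) < ‖x‖ := norm_pos_iff.2 h2
    refine Set.mem_smul.2 ⟨‖x‖, ⟨hx0, h1⟩, ‖x‖⁻¹ • x, ⟨⟨‖x‖⁻¹ • x, ?_⟩, ?_, rfl⟩, ?_⟩
    · exact mem_sphere_zero_iff_norm.2 (norm_smul_inv_norm h2)
    · show t ≤ ⟪‖x‖⁻¹ • x, w⟫
      rw [real_inner_smul_left]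
      rw [le_inv_mul_iff₀ hx0, mul_comm]
      exact h3
    · rw [smul_inv_smul₀ hx0.ne']

lemma vol_coneS (t : ℝ) {w w' : EuclideanSpace ℝ (Fin d)} (hw : ‖w‖ = 1) (hw' : ‖w'‖ = 1) :
    volume (coneS d t w) = volume (coneS d t w') := by
  set e : EuclideanSpace ℝ (Fin d) ≃ₗᵢ[ℝ] EuclideanSpace ℝ (Fin d) :=
    Submodule.reflection (ℝ ∙ (w - w'))ᗮ with he
  have hew : e w = w' := Submodule.reflection_sub (hw.trans hw'.symm)
  have hpre : coneS d t w = e ⁻¹' coneS d t w' := by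
    ext x
    simp only [coneS, Set.mem_preimage, Set.mem_setOf_eq, e.norm_map]
    have h0 : e x = 0 ↔ x = 0 := by
      constructor
      · intro h; simpa using congrArg e.symm h
      · rintro rfl; simp
    have hi : ⟪e x, w'⟫ = ⟪x, w⟫ := by
      rw [← hew, LinearIsometryEquiv.inner_map_map]
    rw [hi]; simp only [ne_eq, h0]
  rw [hpre, e.measurePreserving.measure_preimage (coneS_meas t w').nullMeasurableSet]

lemma cap_measure_eq (t : ℝ) {w w' : EuclideanSpace ℝ (Fin d)} (hw : ‖w‖ = 1) (hw' : ‖w'‖ = 1) :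
    (volume : Measure (EuclideanSpace ℝ (Fin d))).toSphere (capS d t w) =
    (volume : Measure (EuclideanSpace ℝ (Fin d))).toSphere (capS d t w') := by
  rw [Measure.toSphere_apply' _ (capS_meas t w), Measure.toSphere_apply' _ (capS_meas t w'),
    cone_eq, cone_eq, vol_coneS t hw hw']

lemma cap_pos (hd : 2 ≤ d) {t : ℝ} (ht1 : t < 1) {w : EuclideanSpace ℝ (Fin d)} (hw : ‖w‖ = 1) :
    0 < (volume : Measure (EuclideanSpace ℝ (Fin d))).toSphere (capS d t w) := by
  rw [Measure.toSphere_apply' _ (capS_meas t w), cone_eq]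
  have hdim : (0:ℝ≥0∞) < Module.finrank ℝ (EuclideanSpace ℝ (Fin d)) := by
    rw [finrank_euclideanSpace_fin]
    exact_mod_cast (by omega : 0 < d)
  refine ENNReal.mul_pos hdim.ne' ?_
  set O : Set (EuclideanSpace ℝ (Fin d)) := {x | ‖x‖ < 1 ∧ t * ‖x‖ < ⟪x, w⟫} with hO
  have hOopen : IsOpen O :=
    (isOpen_lt continuous_norm continuous_const).inter
      (isOpen_lt (continuous_const.mul continuous_norm)
        (Continuous.inner continuous_id continuous_const))
  have hmem : ((2:ℝ)⁻¹ • w) ∈ O := by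
    constructor
    · rw [norm_smul, hw]; norm_num
    · rw [norm_smul, hw, real_inner_smul_left, real_inner_self_eq_norm_mul_norm, hw]
      norm_num
      linarith
  have hsub : O ⊆ coneS d t w := by
    rintro x ⟨h1, h2⟩
    refine ⟨h1, ?_, h2.le⟩
    rintro rfl
    simp at h2
  exact ((hOopen.measure_pos volume ⟨_, hmem⟩).trans_le (measure_mono hsub)).ne'

/-- the halfspace set for a (possibly non-unit) vector `v` -/
noncomputable def AA (d : ℕ) (t : ℝ) (v : EuclideanSpace ℝ (Fin d)) :
    Set (sphere (0 : EuclideanSpace ℝ (Fin d)) 1) :=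
  {u | t * ‖v‖ ≤ ⟪v, (u : EuclideanSpace ℝ (Fin d))⟫}

lemma AA_meas (t : ℝ) (v : EuclideanSpace ℝ (Fin d)) : MeasurableSet (AA d t v) := by
  have h : Continuous fun u : sphere (0 : EuclideanSpace ℝ (Fin d)) 1 =>
      ⟪v, (u : EuclideanSpace ℝ (Fin d))⟫ :=
    Continuous.inner continuous_const continuous_subtype_val
  exact (isClosed_Ici.preimage h).measurableSet

lemma AA_eq_capS (t : ℝ) {v : EuclideanSpace ℝ (Fin d)} (hv : v ≠ 0) :
    AA d t v = capS d t (‖v‖⁻¹ • v) := by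
  have hv0 : (0:ℝ) < ‖v‖ := norm_pos_iff.2 hv
  ext u
  simp only [AA, capS, Set.mem_setOf_eq, real_inner_smul_right]
  rw [le_inv_mul_iff₀ hv0, mul_comm, real_inner_comm]

lemma filter_sum (p : EuclideanSpace ℝ (Fin d) → Prop) [DecidablePred p]
    (S : Multiset (EuclideanSpace ℝ (Fin d))) :
    (S.filter p).sum = (S.map (fun v => if p v then v else 0)).sum := by
  induction S using Multiset.induction_on with
  | empty => simp
  | cons a S ih =>
    by_cases h : p a <;>
      simp [Multiset.filter_cons_of_pos, Multiset.filter_cons_of_neg, h, ih]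

lemma key_sum (t : ℝ) (S : Multiset (EuclideanSpace ℝ (Fin d))) :
    Integrable (fun u : sphere (0 : EuclideanSpace ℝ (Fin d)) 1 =>
        (S.map (fun v => (AA d t v).indicator (fun _ => v) u)).sum)
      (volume : Measure (EuclideanSpace ℝ (Fin d))).toSphere ∧
    ∫ u, (S.map (fun v => (AA d t v).indicator (fun _ => v) u)).sum
        ∂(volume : Measure (EuclideanSpace ℝ (Fin d))).toSphere
      = (S.map (fun v =>
          ((volume : Measure (EuclideanSpace ℝ (Fin d))).toSphere (AA d t v)).toReal • v)).sum := by
  induction S using Multiset.induction_on with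
  | empty => simp
  | cons a S ih =>
    simp only [Multiset.map_cons, Multiset.sum_cons]
    have hInt : Integrable ((AA d t a).indicator fun _ => a)
        (volume : Measure (EuclideanSpace ℝ (Fin d))).toSphere :=
      (integrable_const a).indicator (AA_meas t a)
    refine ⟨hInt.add ih.1, ?_⟩
    rw [integral_add hInt ih.1, ih.2, integral_indicator_const a (AA_meas t a)]
    rfl

end ConeAux

open ConeAux in
/-- If `R` is a finite multiset of vectors of norm at most 1 such that for every
unit vector `u` and every sub-multiset `S ⊆ R` the sum of the elements of `S`
lying in the ball-cone `K_t(u)` has norm at most `M`, then every sub-multiset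
`S ⊆ R` satisfies `|Σ(S)| ≤ M / σ_t`. -/
theorem sum_norm_le_of_cone_sums_small
    (d : ℕ) (hd : 2 ≤ d) (t M : ℝ) (ht0 : 0 < t) (ht1 : t < 1) (hM : 0 ≤ M)
    (R : Multiset (EuclideanSpace ℝ (Fin d))) (hR : ∀ v ∈ R, ‖v‖ ≤ 1)
    (hyp : ∀ u : EuclideanSpace ℝ (Fin d), ‖u‖ = 1 → ∀ S ≤ R,
      ‖(S.filter (fun v => t * ‖v‖ ≤ (inner ℝ v u : ℝ))).sum‖ ≤ M) :
    ∀ S ≤ R, ‖S.sum‖ ≤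
      M / capSigma d t (EuclideanSpace.single (⟨0, by omega⟩ : Fin d) 1) := by
  intro S hS
  set u₀ : EuclideanSpace ℝ (Fin d) := EuclideanSpace.single (⟨0, by omega⟩ : Fin d) 1 with hu₀
  have hu₀n : ‖u₀‖ = 1 := by
    rw [hu₀, EuclideanSpace.norm_single, norm_one]
  set μ := (volume : Measure (EuclideanSpace ℝ (Fin d))).toSphere with hμ
  set c₀ := (μ (capS d t u₀)).toReal with hc
  set T := (μ (univ : Set (sphere (0 : EuclideanSpace ℝ (Fin d)) 1))).toReal with hT
  have huniv_pos : 0 < μ (univ : Set (sphere (0 : EuclideanSpace ℝ (Fin d)) 1)) := by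
    rw [hμ, Measure.toSphere_apply_univ]
    refine ENNReal.mul_pos ?_ (measure_ball_pos volume 0 one_pos).ne'
    simp [finrank_euclideanSpace_fin]
    omega
  have hc₀pos : 0 < c₀ := ENNReal.toReal_pos (cap_pos hd ht1 hu₀n).ne' (measure_ne_top μ _)
  have hTpos : 0 < T := ENNReal.toReal_pos huniv_pos.ne' (measure_ne_top μ _)
  -- capSigma value
  have hσ : capSigma d t u₀ = c₀ / T := by
    rw [capSigma, ENNReal.toReal_div]
    rfl
  -- integral identity
  have hcoeff : ∀ v : EuclideanSpace ℝ (Fin d), (μ (AA d t v)).toReal • v = c₀ • v := by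
    intro v
    by_cases hv : v = 0
    · simp [hv]
    · have hw1 : ‖(‖v‖⁻¹ : ℝ) • v‖ = 1 := by
        rw [norm_smul, norm_inv, norm_norm]
        field_simp
      rw [AA_eq_capS t hv, hc, hμ, cap_measure_eq t hw1 hu₀n]
  have hint : ∫ u, ((S.map (fun v => (AA d t v).indicator (fun _ => v) u)).sum) ∂μ
      = c₀ • S.sum := by
    rw [(key_sum t S).2, Multiset.map_congr rfl (fun v _ => hcoeff v), ← Multiset.smul_sum]
  -- pointwise bound
  have hbound : ∀ u : sphere (0 : EuclideanSpace ℝ (Fin d)) 1,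
      ‖(S.map (fun v => (AA d t v).indicator (fun _ => v) u)).sum‖ ≤ M := by
    intro u
    have hFeq : (S.map (fun v => (AA d t v).indicator (fun _ => v) u)).sum
        = (S.filter (fun v => t * ‖v‖ ≤
            (inner ℝ v (u : EuclideanSpace ℝ (Fin d)) : ℝ))).sum := by
      rw [filter_sum]
      refine congrArg Multiset.sum (Multiset.map_congr rfl fun v _ => ?_)
      simp [AA, Set.indicator_apply]
    rw [hFeq]
    exact hyp (u : EuclideanSpace ℝ (Fin d)) (norm_eq_of_mem_sphere u) S hS
  have hnormint : ‖∫ u, ((S.map (fun v => (AA d t v).indicator (fun _ => v) u)).sum) ∂μ‖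
      ≤ M * T :=
    norm_integral_le_of_norm_le_const (ae_of_all _ hbound)
  rw [hint, norm_smul, Real.norm_eq_abs, abs_of_pos hc₀pos] at hnormint
  rw [hσ, div_div_eq_mul_div, le_div_iff₀ hc₀pos]
  calc ‖S.sum‖ * c₀ = c₀ * ‖S.sum‖ := mul_comm _ _
    _ ≤ M * T := hnormint
end

section
/- Let d ≥ 2 be an integer and let t be a real number with 1/√(d−1) ≤ t < 1. Then ∫_t^1 (1 − x²)^{d/2} dx ≥ (1 − t²)^{d/2 + 1} / (2·d·t). -/
open Set intervalIntegral

/-- The map `u ↦ u (1-u)^{q+1}` is antitone on `[1/(q+2), 1]`. -/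
lemma aux_antitone (q : ℕ) :
    AntitoneOn (fun u : ℝ => u * (1 - u) ^ (q + 1)) (Set.Icc (1 / ((q : ℝ) + 2)) 1) := by
  have hder : ∀ x : ℝ, HasDerivAt (fun u : ℝ => u * (1 - u) ^ (q + 1))
      (1 * (1 - x) ^ (q + 1) + x * ((q + 1 : ℕ) * (1 - x) ^ q * (-1))) x := by
    intro x
    have h1 : HasDerivAt (fun u : ℝ => 1 - u) (-1) x := (hasDerivAt_id x).const_sub 1
    have h2 : HasDerivAt (fun u : ℝ => (1 - u) ^ (q + 1))
        ((q + 1 : ℕ) * (1 - x) ^ q * (-1)) x := by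
      simpa using h1.fun_pow (q + 1)
    exact (hasDerivAt_id x).mul h2
  apply antitoneOn_of_deriv_nonpos (convex_Icc _ _)
  · exact (continuous_id.mul ((continuous_const.sub continuous_id).pow _)).continuousOn
  · intro x hx
    exact (hder x).differentiableAt.differentiableWithinAt
  · intro x hx
    rw [interior_Icc] at hx
    rw [(hder x).deriv]
    have hx1 : x < 1 := hx.2
    have hx0 : 1 / ((q : ℝ) + 2) < x := hx.1
    have hq2 : (0 : ℝ) < (q : ℝ) + 2 := by positivity
    have hxl : 1 < ((q : ℝ) + 2) * x := by
      rw [div_lt_iff₀ hq2] at hx0; linarith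
    have h0 : (0 : ℝ) ≤ (1 - x) ^ q := pow_nonneg (by linarith) q
    have h1 : 1 - x ≤ ((q : ℝ) + 1) * x := by linarith
    have h2 : (1 - x) ^ (q + 1) = (1 - x) ^ q * (1 - x) := pow_succ _ _
    have h3 : (1 - x) ^ q * (1 - x) ≤ (1 - x) ^ q * (((q : ℝ) + 1) * x) :=
      mul_le_mul_of_nonneg_left h1 h0
    push_cast
    nlinarith [h3]

set_option maxHeartbeats 1000000 in
/-- For `d ≥ 2` and `1/√(d-1) ≤ t < 1`,
`∫_t^1 (1 - x²)^{d/2} dx ≥ (1 - t²)^{d/2 + 1} / (2·d·t)`. -/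
theorem integral_ge_tangent_triangle
    (d : ℕ) (hd : 2 ≤ d) (t : ℝ)
    (ht0 : 1 / Real.sqrt ((d : ℝ) - 1) ≤ t) (ht1 : t < 1) :
    (1 - t ^ 2) ^ ((d : ℝ) / 2 + 1) / (2 * (d : ℝ) * t) ≤
      ∫ x in t..1, (1 - x ^ 2) ^ ((d : ℝ) / 2) := by
  -- dispose of d = 2, where hypotheses are contradictory
  rcases eq_or_lt_of_le hd with hd2 | hd3
  · exfalso
    subst hd2
    norm_num [Real.sqrt_one] at ht0
    linarith
  have hd3' : 3 ≤ d := hd3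
  obtain ⟨q, rfl⟩ : ∃ q : ℕ, d = q + 3 := ⟨d - 3, by omega⟩
  set d' : ℝ := ((q + 3 : ℕ) : ℝ) with hd'
  have hdq : d' = (q : ℝ) + 3 := by push_cast [hd']; ring
  have hd0 : (0 : ℝ) < d' := by rw [hdq]; positivity
  set p := d' / 2 with hp
  have hp1 : 1 ≤ p := by rw [hp, hdq]; linarith [(Nat.cast_nonneg q : (0:ℝ) ≤ (q:ℝ))]
  have hds : (1 : ℝ) ≤ d' - 1 := by rw [hdq]; linarith [(Nat.cast_nonneg q : (0:ℝ) ≤ (q:ℝ))]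
  have hsq : (0 : ℝ) < Real.sqrt (d' - 1) := Real.sqrt_pos.2 (by linarith)
  have ht0' : (0 : ℝ) < t := lt_of_lt_of_le (by positivity) ht0
  -- (d-1) t² ≥ 1
  have htt : 1 ≤ (d' - 1) * t ^ 2 := by
    have h2 : (1 / Real.sqrt (d' - 1)) ^ 2 ≤ t ^ 2 :=
      pow_le_pow_left₀ (by positivity) ht0 2
    rw [div_pow, one_pow, Real.sq_sqrt (by linarith : (0:ℝ) ≤ d' - 1)] at h2
    rw [div_le_iff₀ (by linarith)] at h2
    linarith [h2]
  have hdt1 : 1 ≤ (d' - 1) * t := by nlinarith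
  set s := 1 - t ^ 2 with hs
  have hs0 : 0 < s := by nlinarith
  set c := t + s / (d' * t) with hc
  have htc : t < c := by
    rw [hc]; have : 0 < s / (d' * t) := by positivity
    linarith
  have hc1 : c ≤ 1 := by
    rw [hc]
    have h1 : s / (d' * t) ≤ 1 - t := by
      rw [div_le_iff₀ (by positivity)]
      nlinarith
    linarith
  set B := d' * t * s ^ (p - 1) with hB
  -- key inequality: for t ≤ x < 1, x (1-x²)^{p-1} ≤ t s^{p-1}
  have key : ∀ x : ℝ, t ≤ x → x < 1 → x * (1 - x ^ 2) ^ (p - 1) ≤ t * s ^ (p - 1) := by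
    intro x htx hx1
    have hx0 : (0 : ℝ) < x := lt_of_lt_of_le ht0' htx
    have hxs : (0 : ℝ) < 1 - x ^ 2 := by nlinarith
    have hmem_t : t ^ 2 ∈ Set.Icc (1 / ((q : ℝ) + 2)) 1 := by
      constructor
      · rw [div_le_iff₀ (by positivity)]
        have : d' - 1 = (q : ℝ) + 2 := by rw [hdq]; ring
        nlinarith [htt]
      · nlinarith
    have hmem_x : x ^ 2 ∈ Set.Icc (1 / ((q : ℝ) + 2)) 1 := by
      constructor
      · have : t ^ 2 ≤ x ^ 2 := by nlinarith
        linarith [hmem_t.1]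
      · nlinarith
    have hsq_le : t ^ 2 ≤ x ^ 2 := by nlinarith
    have hAnti := aux_antitone q hmem_t hmem_x hsq_le
    -- hAnti : x^2 * (1 - x^2)^(q+1) ≤ t^2 * (1 - t^2)^(q+1)
    have hqe : (p - 1) * 2 = ((q + 1 : ℕ) : ℝ) := by
      rw [hp, hdq]; push_cast; ring
    have hsqr : ∀ y : ℝ, 0 ≤ 1 - y ^ 2 →
        (y * (1 - y ^ 2) ^ (p - 1)) ^ 2 = y ^ 2 * (1 - y ^ 2) ^ (q + 1) := by
      intro y hy
      rw [mul_pow]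
      congr 1
      rw [← Real.rpow_natCast ((1 - y ^ 2) ^ (p - 1)) 2, ← Real.rpow_mul hy]
      push_cast
      rw [show (p - 1) * 2 = ((q : ℝ) + 1) by rw [hp, hdq]; ring]
      rw [← Real.rpow_natCast (1 - y ^ 2) (q + 1)]
      push_cast
      ring_nf
    have hL : (x * (1 - x ^ 2) ^ (p - 1)) ^ 2 ≤ (t * s ^ (p - 1)) ^ 2 := by
      rw [hsqr x hxs.le, hs, hsqr t (by nlinarith)]
      simpa using hAnti
    have hLn : 0 ≤ x * (1 - x ^ 2) ^ (p - 1) := by positivity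
    have hRn : 0 ≤ t * s ^ (p - 1) := by positivity
    exact (pow_le_pow_iff_left₀ hLn hRn two_ne_zero).1 hL
  -- derivative facts
  have hf : ∀ x : ℝ, HasDerivAt (fun y : ℝ => (1 - y ^ 2) ^ p)
      (-(2 * x ^ 1) * p * (1 - x ^ 2) ^ (p - 1)) x := by
    intro x
    exact ((hasDerivAt_pow 2 x).const_sub 1).rpow_const (Or.inr hp1) |>.congr_deriv (by push_cast; ring)
  have hg : ∀ x : ℝ, HasDerivAt (fun y : ℝ => s ^ p - B * (y - t)) (-(B * 1)) x := by
    intro x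
    exact (((hasDerivAt_id x).sub_const t).const_mul B).const_sub _
  -- monotonicity of f - g on [t, 1)
  have hfc : Continuous (fun y : ℝ => (1 - y ^ 2) ^ p) := by
    apply Continuous.rpow_const (by continuity)
    intro x; right; positivity
  have hgc : Continuous (fun y : ℝ => s ^ p - B * (y - t)) := by continuity
  have hmono : MonotoneOn (fun y : ℝ => (1 - y ^ 2) ^ p - (s ^ p - B * (y - t)))
      (Set.Ico t 1) := by
    apply monotoneOn_of_deriv_nonneg (convex_Ico t 1) ((hfc.sub hgc).continuousOn)
    · intro x hx
      exact ((hf x).sub (hg x)).differentiableAt.differentiableWithinAt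
    · intro x hx
      rw [interior_Ico] at hx
      rw [((hf x).sub (hg x)).deriv]
      have hk := key x hx.1.le hx.2
      have h2p : 2 * p = d' := by rw [hp]; ring
      have he : -(2 * x ^ 1) * p * (1 - x ^ 2) ^ (p - 1)
          = -(d' * (x * (1 - x ^ 2) ^ (p - 1))) := by
        rw [← h2p]; ring
      rw [he, hB]
      have := mul_le_mul_of_nonneg_left hk hd0.le
      nlinarith [this]
  -- pointwise inequality on [t, c]
  have hpt : ∀ x ∈ Set.Icc t c, s ^ p - B * (x - t) ≤ (1 - x ^ 2) ^ p := by
    intro x hx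
    rcases lt_or_ge x 1 with hx1 | hx1
    · have h1 := hmono (Set.mem_Ico.2 ⟨le_refl t, ht1⟩) (Set.mem_Ico.2 ⟨hx.1, hx1⟩) hx.1
      simp only [sub_self, mul_zero, sub_zero] at h1
      have : (1 - t ^ 2) ^ p - (s ^ p - B * (t - t)) = 0 := by
        rw [← hs]; ring_nf
      nlinarith [h1, this]
    · -- x = 1, so c = 1
      have hx1' : x = 1 := le_antisymm (hx.2.trans hc1) hx1
      have hc1' : c = 1 := le_antisymm hc1 (hx1' ▸ hx.2)
      subst hx1'
      have hf1 : ((1 : ℝ) - 1 ^ 2) ^ p = 0 := by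
        norm_num
        exact Real.zero_rpow (by positivity)
      rw [hf1]
      -- g(1) = g(c) = 0
      have hBc : B * (c - t) = s ^ p := by
        rw [hB, hc]
        have h1 : t + s / (d' * t) - t = s / (d' * t) := by ring
        rw [h1]
        have h2 : d' * t * s ^ (p - 1) * (s / (d' * t)) = s ^ (p - 1) * s := by
          field_simp
        rw [h2, ← Real.rpow_add_one hs0.ne' (p - 1)]
        norm_num
      rw [← hc1', hBc]
      simp
  -- integrability
  have hfi : ∀ a b : ℝ, IntervalIntegrable (fun y : ℝ => (1 - y ^ 2) ^ p)
      MeasureTheory.volume a b := fun a b => hfc.intervalIntegrable a b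
  have hgi : ∀ a b : ℝ, IntervalIntegrable (fun y : ℝ => s ^ p - B * (y - t))
      MeasureTheory.volume a b := fun a b => hgc.intervalIntegrable a b
  -- compute the integral of g over [t, c]
  have hintg : (∫ x in t..c, (s ^ p - B * (x - t)))
      = s ^ p * (c - t) - B * ((c - t) ^ 2 / 2) := by
    rw [intervalIntegral.integral_sub (by apply Continuous.intervalIntegrable; continuity)
      (by apply Continuous.intervalIntegrable; continuity)]
    rw [intervalIntegral.integral_const, intervalIntegral.integral_const_mul]
    have h1 : (∫ x in t..c, (x - t)) = (c - t) ^ 2 / 2 := by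
      rw [intervalIntegral.integral_comp_sub_right (fun x => x) t]
      rw [integral_id]
      ring
    rw [h1, smul_eq_mul]
    ring
  have hval : s ^ p * (c - t) - B * ((c - t) ^ 2 / 2) = s ^ (p + 1) / (2 * d' * t) := by
    have h1 : c - t = s / (d' * t) := by rw [hc]; ring
    have e1 : s ^ (p + 1) = s ^ p * s := by
      rw [Real.rpow_add_one hs0.ne']
    have e2 : s ^ p = s ^ (p - 1) * s := by
      rw [← Real.rpow_add_one hs0.ne' (p - 1)]; norm_num
    rw [h1, hB, e1, e2]
    have hdt : d' * t ≠ 0 := by positivity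
    field_simp
    ring
  -- assemble
  have hsplit : (∫ x in t..1, (1 - x ^ 2) ^ p)
      = (∫ x in t..c, (1 - x ^ 2) ^ p) + ∫ x in c..1, (1 - x ^ 2) ^ p := by
    rw [intervalIntegral.integral_add_adjacent_intervals (hfi t c) (hfi c 1)]
  have hpos : 0 ≤ ∫ x in c..1, (1 - x ^ 2) ^ p := by
    apply intervalIntegral.integral_nonneg hc1
    intro u hu
    have hu0 : 0 < u := lt_of_lt_of_le (ht0'.trans htc) hu.1
    have : 0 ≤ 1 - u ^ 2 := by nlinarith [hu.2]
    positivity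
  have hmain : s ^ (p + 1) / (2 * d' * t) ≤ ∫ x in t..c, (1 - x ^ 2) ^ p := by
    rw [← hval, ← hintg]
    exact intervalIntegral.integral_mono_on htc.le (hgi t c) (hfi t c) hpt
  calc (1 - t ^ 2) ^ (d' / 2 + 1) / (2 * d' * t)
      = s ^ (p + 1) / (2 * d' * t) := by rw [hs, hp]
    _ ≤ ∫ x in t..c, (1 - x ^ 2) ^ p := hmain
    _ ≤ ∫ x in t..1, (1 - x ^ 2) ^ p := by rw [hsplit]; linarith
end

section
/- Let d ≥ 10 be an integer and set t = √(log d / (2d)). Then σ_t ≥ (1/13) · (1 − t²)^{d/2} / (√d · t). -/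
set_option maxHeartbeats 1000000

open Real MeasureTheory Set Metric
open scoped ENNReal Pointwise


lemma two_le_log {d : ℕ} (hd : 10 ≤ d) : 2 ≤ Real.log d := by
  have h10 : (10:ℝ) ≤ d := by exact_mod_cast hd
  have : Real.exp 2 ≤ 10 := by
    have h := Real.exp_one_lt_d9
    have h2 : Real.exp 2 = Real.exp 1 * Real.exp 1 := by rw [← Real.exp_add]; norm_num
    nlinarith [Real.exp_pos 1]
  calc (2:ℝ) = Real.log (Real.exp 2) := (Real.log_exp 2).symm
    _ ≤ Real.log d := Real.log_le_log (Real.exp_pos 2) (by linarith)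

lemma log_le_two_fifth {d : ℕ} (hd : 10 ≤ d) : Real.log d ≤ 2 * d / 5 := by
  have h10 : (10:ℝ) ≤ d := by exact_mod_cast hd
  rw [Real.log_le_iff_le_exp (by linarith)]
  have h1 : (2 * (d:ℝ) / 15) + 1 ≤ Real.exp (2 * d / 15) := Real.add_one_le_exp _
  have h2 : ((2 * (d:ℝ) / 15) + 1) ^ 3 ≤ Real.exp (2 * d / 15) ^ 3 :=
    pow_le_pow_left₀ (by positivity) h1 3
  have h3 : Real.exp (2 * (d:ℝ) / 15) ^ 3 = Real.exp (2 * d / 5) := by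
    rw [← Real.exp_nat_mul]; norm_num; ring_nf
  have e1 : 8*(d:ℝ)^2*10 ≤ 8*(d:ℝ)^2*d := by
    apply mul_le_mul_of_nonneg_left h10; positivity
  have e2 : 260*(d:ℝ)*10 ≤ 260*(d:ℝ)*d := by
    apply mul_le_mul_of_nonneg_left h10; positivity
  nlinarith [h2, h3, e1, e2]

lemma gamma_step {x : ℝ} (hx : 0 < x) :
    Real.sqrt x * Real.Gamma (x + 1/2) ≤ Real.Gamma (x + 1) := by
  have hc := Real.convexOn_log_Gamma.2 (Set.mem_Ioi.2 hx) (Set.mem_Ioi.2 (by linarith : (0:ℝ) < x + 1))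
      (by norm_num : (0:ℝ) ≤ (1:ℝ)/2) (by norm_num : (0:ℝ) ≤ (1:ℝ)/2) (by norm_num)
  have hmid : (1/2 : ℝ) • x + (1/2 : ℝ) • (x+1) = x + 1/2 := by
    simp only [smul_eq_mul]; ring
  rw [hmid] at hc
  simp only [Function.comp_apply, smul_eq_mul] at hc
  have hG : Real.Gamma (x+1) = x * Real.Gamma x := Real.Gamma_add_one (ne_of_gt hx)
  have hGx : 0 < Real.Gamma x := Real.Gamma_pos_of_pos hx
  have hG1 : 0 < Real.Gamma (x+1) := Real.Gamma_pos_of_pos (by linarith)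
  have hGh : 0 < Real.Gamma (x+1/2) := Real.Gamma_pos_of_pos (by linarith)
  have h2 : Real.Gamma (x+1/2) ^ 2 ≤ Real.Gamma x * Real.Gamma (x+1) := by
    have h := Real.exp_le_exp.2 hc
    rw [Real.exp_log hGh] at h
    have h3 : Real.exp (1/2 * Real.log (Real.Gamma x) + 1/2 * Real.log (Real.Gamma (x+1)))
        ^ 2 = Real.Gamma x * Real.Gamma (x+1) := by
      rw [← Real.exp_nat_mul]
      push_cast
      rw [show (2:ℝ) * (1/2 * Real.log (Real.Gamma x) + 1/2 * Real.log (Real.Gamma (x+1)))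
        = Real.log (Real.Gamma x) + Real.log (Real.Gamma (x+1)) by ring,
        Real.exp_add, Real.exp_log hGx, Real.exp_log hG1]
    nlinarith [Real.exp_pos (1/2 * Real.log (Real.Gamma x) + 1/2 * Real.log (Real.Gamma (x+1)))]
  have hs : Real.sqrt x ^ 2 = x := Real.sq_sqrt hx.le
  nlinarith [Real.sqrt_nonneg x, mul_pos hGx hG1]

lemma const_le : 2 * Real.sqrt 2 * Real.sqrt π * Real.exp (25/27) ≤ 13 := by
  have h1 : Real.exp (25/27) * Real.exp (2/27) = Real.exp 1 := by
    rw [← Real.exp_add]; norm_num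
  have h2 : (2:ℝ)/27 + 1 ≤ Real.exp (2/27) := Real.add_one_le_exp _
  have h3 : Real.exp 1 < 2.7182818286 := Real.exp_one_lt_d9
  have h4 : Real.exp (25/27) ≤ 2.531 := by
    nlinarith [Real.exp_pos (25/27), Real.exp_pos (2/27)]
  have hπ : π ≤ 3.15 := Real.pi_lt_d2.le
  have s2 : Real.sqrt 2 ≤ 1.41422 := by
    nlinarith [Real.sq_sqrt (by norm_num : (0:ℝ) ≤ 2), Real.sqrt_nonneg 2]
  have sπ : Real.sqrt π ≤ 1.7749 := by
    nlinarith [Real.sq_sqrt Real.pi_pos.le, Real.sqrt_nonneg π]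
  have hp : Real.sqrt 2 * Real.sqrt π ≤ 1.41422 * 1.7749 :=
    mul_le_mul s2 sπ (Real.sqrt_nonneg π) (by norm_num)
  nlinarith [Real.exp_pos (25/27), mul_le_mul hp h4 (Real.exp_pos _).le
    (by norm_num : (0:ℝ) ≤ 1.41422 * 1.7749)]

lemma realKey (n : ℕ) (D t ε ρ : ℝ) (hn : 9 ≤ n) (hDdef : D = (n:ℝ)+1)
    (hlog2 : 2 ≤ Real.log D) (hlog5 : Real.log D ≤ 2 * D / 5)
    (ht : t = Real.sqrt (Real.log D / (2*D)))
    (hε : ε = 1/(2*t*D))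
    (hρ : ρ = Real.sqrt (1 - (t+ε)^2)) :
    1/13 * (1 - t^2) ^ (D/2) / (Real.sqrt D * t) *
        (Real.sqrt π ^ (n+1) / Real.Gamma (D/2 + 1))
      ≤ ε * (ρ ^ n * (Real.sqrt π ^ n / Real.Gamma ((n:ℝ)/2 + 1))) := by
  have hD : (10:ℝ) ≤ D := by
    have : (9:ℝ) ≤ n := by exact_mod_cast hn
    rw [hDdef]; linarith
  have hDpos : (0:ℝ) < D := by linarith
  have hlogpos : 0 < Real.log D := by linarith
  have ht2 : t^2 = Real.log D / (2*D) := by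
    rw [ht]; exact Real.sq_sqrt (by positivity)
  have htpos : 0 < t := by rw [ht]; positivity
  have ht5 : t^2 ≤ 1/5 := by
    rw [ht2, div_le_div_iff₀ (by positivity) (by norm_num)]
    nlinarith
  have hεpos : 0 < ε := by rw [hε]; positivity
  have hε2 : 2*t*ε = 1/D := by rw [hε]; field_simp
  have hεsq : ε^2 = 1/(2*D*Real.log D) := by
    rw [hε, div_pow, mul_pow, mul_pow, ht2]; field_simp
  have hεsq' : ε^2 ≤ 1/(4*D) := by
    rw [hεsq, div_le_div_iff₀ (by positivity) (by positivity)]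
    nlinarith
  have hA : (t+ε)^2 - t^2 ≤ 5/(4*D) := by
    have e : (t+ε)^2 - t^2 = 2*t*ε + ε^2 := by ring
    have e2 : 1/D + 1/(4*D) = 5/(4*D) := by field_simp; ring
    rw [e, hε2]; linarith
  have hA0 : 0 ≤ (t+ε)^2 - t^2 := by nlinarith
  have h58 : 5/(4*D) ≤ 1/8 := by
    rw [div_le_div_iff₀ (by positivity) (by norm_num)]; linarith
  have hQpos : 0 < 1 - (t+ε)^2 := by linarith
  have hPpos : 0 < 1 - t^2 := by linarith
  have hP45 : 4/5 ≤ 1 - t^2 := by linarith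
  have hρpos : 0 < ρ := by rw [hρ]; positivity
  have hρ2 : ρ^2 = 1 - (t+ε)^2 := by rw [hρ]; exact Real.sq_sqrt hQpos.le
  have hρle1 : ρ ≤ 1 := by
    calc ρ = Real.sqrt (1 - (t+ε)^2) := hρ
      _ ≤ Real.sqrt 1 := Real.sqrt_le_sqrt (by nlinarith)
      _ = 1 := Real.sqrt_one
  set x : ℝ := ((t+ε)^2 - t^2)/(1 - t^2) with hxdef
  have hx0 : 0 ≤ x := div_nonneg hA0 hPpos.le
  have hxle : x ≤ 25/(16*D) := by
    rw [hxdef]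
    calc ((t+ε)^2 - t^2)/(1 - t^2) ≤ (5/(4*D))/(4/5) :=
        div_le_div₀ (by positivity) hA (by norm_num) hP45
      _ = 25/(16*D) := by rw [div_div_eq_mul_div]; ring
  have hx32 : x ≤ 5/32 := by
    have : 25/(16*D) ≤ 5/32 := by
      rw [div_le_div_iff₀ (by positivity) (by norm_num)]; linarith
    linarith
  have h1x : (0:ℝ) < 1 - x := by linarith
  have hQeq : 1 - (t+ε)^2 = (1-t^2)*(1-x) := by
    rw [hxdef]; field_simp; ring
  have hRexp : (1-x)⁻¹ ≤ Real.exp (50/(27*D)) := by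
    have e1 : x/(1-x) + 1 ≤ Real.exp (x/(1-x)) := Real.add_one_le_exp _
    have e2 : (1-x)⁻¹ = x/(1-x) + 1 := by field_simp; ring
    have e3 : x/(1-x) ≤ 50/(27*D) := by
      calc x/(1-x) ≤ (25/(16*D))/(27/32) := div_le_div₀ (by positivity) hxle (by norm_num) (by linarith)
        _ = 50/(27*D) := by rw [div_div_eq_mul_div]; ring
    calc (1-x)⁻¹ = x/(1-x) + 1 := e2
      _ ≤ Real.exp (x/(1-x)) := e1
      _ ≤ Real.exp (50/(27*D)) := Real.exp_le_exp.2 e3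
  have hcast : ((n+1 : ℕ) : ℝ) = D := by rw [hDdef]; push_cast; ring
  have hρD : (ρ^2) ^ (D/2) = ρ^(n+1) := by
    have h1 : (ρ^2 : ℝ) ^ (D/2) = ρ ^ ((2:ℝ) * (D/2)) := by
      rw [Real.rpow_mul hρpos.le, Real.rpow_two]
    rw [h1, show (2:ℝ)*(D/2) = D by ring, ← hcast, Real.rpow_natCast]
  have core : 2 * Real.sqrt 2 * Real.sqrt π * (1 - t^2) ^ (D/2) ≤ 13 * ρ^n := by
    have hsplit : (1 - t^2) ^ (D/2) = (ρ^2) ^ (D/2) * ((1-x)⁻¹) ^ (D/2) := by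
      rw [← Real.mul_rpow (by positivity) (by positivity)]
      congr 1
      rw [hρ2, hQeq]
      field_simp
    have hRpow : ((1-x)⁻¹) ^ (D/2) ≤ Real.exp (25/27) := by
      calc ((1-x)⁻¹) ^ (D/2) ≤ (Real.exp (50/(27*D))) ^ (D/2) :=
          Real.rpow_le_rpow (by positivity) hRexp (by positivity)
        _ = Real.exp (50/(27*D) * (D/2)) := by
          rw [← Real.exp_one_rpow (50/(27*D)), ← Real.rpow_mul (Real.exp_pos 1).le,
            Real.exp_one_rpow]
        _ = Real.exp (25/27) := by
          congr 1; field_simp; ring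
    have hρn : ρ^(n+1) ≤ ρ^n := pow_le_pow_of_le_one hρpos.le hρle1 (by omega)
    calc 2 * Real.sqrt 2 * Real.sqrt π * (1 - t^2) ^ (D/2)
        = (ρ^2) ^ (D/2) * (2 * Real.sqrt 2 * Real.sqrt π * ((1-x)⁻¹) ^ (D/2)) := by
          rw [hsplit]; ring
      _ ≤ (ρ^2) ^ (D/2) * (2 * Real.sqrt 2 * Real.sqrt π * Real.exp (25/27)) := by
          apply mul_le_mul_of_nonneg_left _ (by positivity)
          apply mul_le_mul_of_nonneg_left hRpow (by positivity)
      _ ≤ (ρ^2) ^ (D/2) * 13 := mul_le_mul_of_nonneg_left const_le (by positivity)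
      _ = 13 * ρ^(n+1) := by rw [hρD]; ring
      _ ≤ 13 * ρ^n := by linarith
  have hΓstep : Real.sqrt (D/2) * Real.Gamma (D/2 + 1/2) ≤ Real.Gamma (D/2 + 1) :=
    gamma_step (by positivity)
  have hΓhalf : (n:ℝ)/2 + 1 = D/2 + 1/2 := by rw [hDdef]; ring
  have hΓ1pos : 0 < Real.Gamma (D/2 + 1) := Real.Gamma_pos_of_pos (by positivity)
  have hΓhpos : 0 < Real.Gamma (D/2 + 1/2) := Real.Gamma_pos_of_pos (by positivity)
  have hDΓ : D * Real.Gamma (D/2 + 1/2) ≤ Real.sqrt 2 * Real.sqrt D * Real.Gamma (D/2 + 1) := by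
    have h2 : Real.sqrt 2 * Real.sqrt (D/2) = Real.sqrt D := by
      rw [← Real.sqrt_mul (by norm_num : (0:ℝ) ≤ 2), show 2*(D/2) = D by ring]
    have h3 : Real.sqrt D * Real.sqrt D = D := Real.mul_self_sqrt hDpos.le
    calc D * Real.Gamma (D/2 + 1/2)
        = Real.sqrt 2 * Real.sqrt D * (Real.sqrt (D/2) * Real.Gamma (D/2 + 1/2)) := by
          rw [show Real.sqrt 2 * Real.sqrt D * (Real.sqrt (D/2) * Real.Gamma (D/2 + 1/2))
            = (Real.sqrt 2 * Real.sqrt (D/2)) * Real.sqrt D * Real.Gamma (D/2 + 1/2) by ring,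
            h2, h3]
      _ ≤ Real.sqrt 2 * Real.sqrt D * Real.Gamma (D/2 + 1) :=
          mul_le_mul_of_nonneg_left hΓstep (by positivity)
  rw [hΓhalf, hε]
  have hsqD : 0 < Real.sqrt D := Real.sqrt_pos.2 hDpos
  have hL : 1/13 * (1 - t^2) ^ (D/2) / (Real.sqrt D * t) *
      (Real.sqrt π ^ (n+1) / Real.Gamma (D/2 + 1))
      = (1/13 * (1 - t^2) ^ (D/2) * Real.sqrt π ^ (n+1)) / (Real.sqrt D * t * Real.Gamma (D/2+1)) := by
    ring
  have hR : 1/(2*t*D) * (ρ ^ n * (Real.sqrt π ^ n / Real.Gamma (D/2 + 1/2)))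
      = (ρ ^ n * Real.sqrt π ^ n) / (2*t*D*Real.Gamma (D/2+1/2)) := by
    ring
  rw [hL, hR, div_le_div_iff₀ (by positivity) (by positivity)]
  have h26 : (0:ℝ) < 26 * Real.sqrt 2 * Real.sqrt π := by positivity
  rw [← mul_le_mul_iff_right₀ h26]
  calc 26 * Real.sqrt 2 * Real.sqrt π *
        (1/13 * (1 - t^2) ^ (D/2) * Real.sqrt π ^ (n+1) * (2*t*D*Real.Gamma (D/2+1/2)))
      = (2 * Real.sqrt 2 * Real.sqrt π * (1 - t^2) ^ (D/2)) *
          (2*t*D*Real.Gamma (D/2+1/2) * Real.sqrt π ^ (n+1)) := by ring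
    _ ≤ (13 * ρ^n) * (2*t*D*Real.Gamma (D/2+1/2) * Real.sqrt π ^ (n+1)) := by
        apply mul_le_mul_of_nonneg_right core (by positivity)
    _ = (13 * ρ^n * 2 * t * Real.sqrt π ^ (n+1)) * (D * Real.Gamma (D/2+1/2)) := by ring
    _ ≤ (13 * ρ^n * 2 * t * Real.sqrt π ^ (n+1)) * (Real.sqrt 2 * Real.sqrt D * Real.Gamma (D/2+1)) :=
        mul_le_mul_of_nonneg_left hDΓ (by positivity)
    _ = 26 * Real.sqrt 2 * Real.sqrt π *
        (ρ ^ n * Real.sqrt π ^ n * (Real.sqrt D * t * Real.Gamma (D/2+1))) := by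
        rw [pow_succ]; ring

/-- For `d ≥ 10` and `t = √(log d / (2d))`,
`σ_t ≥ (1/13) · (1 - t²)^{d/2} / (√d · t)`. -/
theorem capSigma_ge_of_ten_le
    (d : ℕ) (hd : 10 ≤ d) :
    (1 / 13) * (1 - Real.sqrt (Real.log d / (2 * d)) ^ 2) ^ ((d : ℝ) / 2) /
        (Real.sqrt d * Real.sqrt (Real.log d / (2 * d))) ≤
      capSigma d (Real.sqrt (Real.log d / (2 * d)))
        (EuclideanSpace.single (⟨0, by omega⟩ : Fin d) 1) := by
  obtain ⟨n, rfl⟩ : ∃ n, d = n + 1 := ⟨d - 1, by omega⟩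
  have hn : 9 ≤ n := by omega
  haveI : Nonempty (Fin n) := ⟨⟨0, by omega⟩⟩
  set D : ℝ := ((n+1 : ℕ) : ℝ) with hDdef0
  have hDdef : D = (n:ℝ) + 1 := by rw [hDdef0]; push_cast; ring
  have hlog2 : 2 ≤ Real.log D := two_le_log (by omega)
  have hlog5 : Real.log D ≤ 2 * D / 5 := log_le_two_fifth (by omega)
  have hDpos : (0:ℝ) < D := by rw [hDdef]; positivity
  have hD10 : (10:ℝ) ≤ D := by
    rw [hDdef]; have : (9:ℝ) ≤ n := by exact_mod_cast hn
    linarith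
  have hlogpos : 0 < Real.log D := by linarith
  set t : ℝ := Real.sqrt (Real.log D / (2 * D)) with htdef
  have htpos : 0 < t := by rw [htdef]; positivity
  have ht2 : t^2 = Real.log D / (2*D) := Real.sq_sqrt (by positivity)
  set ε : ℝ := 1/(2*t*D) with hεdef
  have hεpos : 0 < ε := by rw [hεdef]; positivity
  set ρ : ℝ := Real.sqrt (1 - (t+ε)^2) with hρdef
  -- basic bounds needed for geometry
  have ht5 : t^2 ≤ 1/5 := by
    rw [ht2, div_le_div_iff₀ (by positivity) (by norm_num)]
    nlinarith
  have hε2 : 2*t*ε = 1/D := by rw [hεdef]; field_simp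
  have hεsq : ε^2 = 1/(2*D*Real.log D) := by
    rw [hεdef, div_pow, mul_pow, mul_pow, ht2]; field_simp
  have hεsq' : ε^2 ≤ 1/(4*D) := by
    rw [hεsq, div_le_div_iff₀ (by positivity) (by positivity)]
    nlinarith
  have hA : (t+ε)^2 - t^2 ≤ 5/(4*D) := by
    have e : (t+ε)^2 - t^2 = 2*t*ε + ε^2 := by ring
    have e2 : 1/D + 1/(4*D) = 5/(4*D) := by field_simp; ring
    rw [e, hε2]; linarith
  have h58 : 5/(4*D) ≤ 1/8 := by
    rw [div_le_div_iff₀ (by positivity) (by norm_num)]; linarith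
  have hQpos : 0 < 1 - (t+ε)^2 := by linarith
  have hρpos : 0 < ρ := by rw [hρdef]; positivity
  have hρ2 : ρ^2 = 1 - (t+ε)^2 := Real.sq_sqrt hQpos.le
  -- the set-up
  set idx : Fin (n+1) := (⟨0, by omega⟩ : Fin (n+1)) with hidxdef
  have hidx : idx = 0 := rfl
  set u : EuclideanSpace ℝ (Fin (n+1)) := EuclideanSpace.single idx 1 with hudef
  set cap : Set (Metric.sphere (0 : EuclideanSpace ℝ (Fin (n+1))) 1) :=
    {w : Metric.sphere (0 : EuclideanSpace ℝ (Fin (n+1))) 1 |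
        t ≤ (inner ℝ (w : EuclideanSpace ℝ (Fin (n+1))) u : ℝ)} with hcapdef
  have hinner : ∀ x : EuclideanSpace ℝ (Fin (n+1)), (inner ℝ x u : ℝ) = x 0 := by
    intro x
    rw [hudef, hidx]
    simp [EuclideanSpace.inner_single_right]
  have hcapMeas : MeasurableSet cap := by
    have : IsClosed cap :=
      isClosed_le continuous_const (Continuous.inner continuous_subtype_val continuous_const)
    exact this.measurableSet
  -- the cylinder
  set B : Set (Fin n → ℝ) :=
    (MeasurableEquiv.toLp 2 (Fin n → ℝ)).symm.symm ⁻¹' (Metric.ball 0 ρ) with hBdef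
  set Cyl : Set (EuclideanSpace ℝ (Fin (n+1))) :=
    (MeasurableEquiv.toLp 2 (Fin (n+1) → ℝ)).symm ⁻¹'
      ((MeasurableEquiv.piFinSuccAbove (fun _ : Fin (n+1) => ℝ) 0) ⁻¹'
        (Set.Ico t (t+ε) ×ˢ B)) with hCyldef
  have hBmeas : MeasurableSet B :=
    (MeasurableEquiv.toLp 2 (Fin n → ℝ)).symm.symm.measurable measurableSet_ball
  have hprodMeas : MeasurableSet (Set.Ico t (t+ε) ×ˢ B) := measurableSet_Ico.prod hBmeas
  have hCylvol : volume Cyl = ENNReal.ofReal ε *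
      volume (Metric.ball (0 : EuclideanSpace ℝ (Fin n)) ρ) := by
    rw [hCyldef,
      (EuclideanSpace.volume_preserving_symm_measurableEquiv_toLp (Fin (n+1))).measure_preimage
        ((hprodMeas.preimage (MeasurableEquiv.piFinSuccAbove (fun _ : Fin (n+1) => ℝ) 0).measurable).nullMeasurableSet),
      (volume_preserving_piFinSuccAbove (fun _ : Fin (n+1) => ℝ) 0).measure_preimage
        hprodMeas.nullMeasurableSet,
      Measure.volume_eq_prod, Measure.prod_prod,
      hBdef,
      ((EuclideanSpace.volume_preserving_symm_measurableEquiv_toLp (Fin n)).symm _).measure_preimage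
        measurableSet_ball.nullMeasurableSet,
      Real.volume_Ico, add_sub_cancel_left]
  -- membership in the cylinder
  have hCylmem : ∀ x : EuclideanSpace ℝ (Fin (n+1)), x ∈ Cyl ↔
      (x 0 ∈ Set.Ico t (t+ε) ∧ ∑ i : Fin n, (x i.succ)^2 < ρ^2) := by
    intro x
    rw [hCyldef, hBdef]
    simp only [Set.mem_preimage, Set.mem_prod, MeasurableEquiv.piFinSuccAbove_apply,
      Fin.zero_succAbove, Set.mem_preimage, mem_ball_zero_iff,
      MeasurableEquiv.symm_symm, MeasurableEquiv.toLp_apply, EuclideanSpace.norm_eq,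
      PiLp.toLp_apply, MeasurableEquiv.toLp_symm_apply,
      Real.norm_eq_abs, sq_abs, Fin.insertNthEquiv_zero, Fin.consEquiv_symm_apply]
    constructor
    · rintro ⟨h1, h2⟩
      refine ⟨h1, ?_⟩
      exact (Real.sqrt_lt' hρpos).mp h2
    · rintro ⟨h1, h2⟩
      refine ⟨h1, ?_⟩
      have hs : 0 ≤ ∑ i : Fin n, x i.succ ^ 2 := by positivity
      rw [show ρ = Real.sqrt (ρ^2) from (Real.sqrt_sq hρpos.le).symm]
      exact Real.sqrt_lt_sqrt hs h2
  -- squared norm decomposition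
  have hnormsq : ∀ x : EuclideanSpace ℝ (Fin (n+1)),
      ‖x‖^2 = (x 0)^2 + ∑ i : Fin n, (x i.succ)^2 := by
    intro x
    have h1 : ‖x‖^2 = ∑ i : Fin (n+1), (x i)^2 := by
      rw [EuclideanSpace.norm_eq, Real.sq_sqrt (by positivity)]
      simp [sq_abs]
    rw [h1, Fin.sum_univ_succ]
  -- inclusion of the cylinder in the solid cap
  have hsub : Cyl ⊆ Set.Ioo (0:ℝ) 1 • ((Subtype.val) '' cap) := by
    intro x hx
    rw [hCylmem x] at hx
    obtain ⟨⟨hx1, hx2⟩, hx3⟩ := hx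
    have hx0pos : 0 < x 0 := lt_of_lt_of_le htpos hx1
    have hxnormsq : ‖x‖^2 < 1 := by
      rw [hnormsq x]
      have h4 : (x 0)^2 < (t+ε)^2 := by nlinarith
      nlinarith [hρ2]
    have hxnorm1 : ‖x‖ < 1 := by nlinarith [norm_nonneg x]
    have hxne : x ≠ 0 := by
      intro h
      rw [h] at hx0pos
      simp at hx0pos
    have hnpos : 0 < ‖x‖ := norm_pos_iff.mpr hxne
    have hx0le : x 0 ≤ ‖x‖ := by
      have hsum : 0 ≤ ∑ i : Fin n, (x i.succ)^2 := by positivity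
      nlinarith [hnormsq x, hsum, norm_nonneg x]
    have hinv : 1 ≤ ‖x‖⁻¹ := (one_le_inv₀ hnpos).mpr hxnorm1.le
    have hw : ‖(‖x‖⁻¹ • x : EuclideanSpace ℝ (Fin (n+1)))‖ = 1 := by
      rw [norm_smul, norm_inv, norm_norm, inv_mul_cancel₀ hnpos.ne']
    have hwmem : (‖x‖⁻¹ • x : EuclideanSpace ℝ (Fin (n+1))) ∈
        Metric.sphere (0 : EuclideanSpace ℝ (Fin (n+1))) 1 := by
      simpa [mem_sphere_zero_iff_norm] using hw
    have hcapmem : (⟨‖x‖⁻¹ • x, hwmem⟩ : Metric.sphere (0 : EuclideanSpace ℝ (Fin (n+1))) 1) ∈ cap := by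
      rw [hcapdef]
      simp only [Set.mem_setOf_eq]
      rw [hinner]
      have happ : (‖x‖⁻¹ • x : EuclideanSpace ℝ (Fin (n+1))) 0 = ‖x‖⁻¹ * x 0 := rfl
      rw [happ]
      nlinarith
    refine Set.mem_smul.mpr ⟨‖x‖, ⟨hnpos, hxnorm1⟩, (‖x‖⁻¹ • x : EuclideanSpace ℝ (Fin (n+1))),
      Set.mem_image_of_mem _ hcapmem, ?_⟩
    rw [smul_smul, mul_inv_cancel₀ hnpos.ne', one_smul]
  -- measure formulas
  have hM1 : (volume : Measure (EuclideanSpace ℝ (Fin (n+1)))).toSphere cap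
      = (n+1 : ℕ) * volume (Set.Ioo (0:ℝ) 1 • ((Subtype.val) '' cap)) := by
    rw [(volume : Measure (EuclideanSpace ℝ (Fin (n+1)))).toSphere_apply' hcapMeas,
      finrank_euclideanSpace_fin]
  have hM2 : (volume : Measure (EuclideanSpace ℝ (Fin (n+1)))).toSphere Set.univ
      = (n+1 : ℕ) * volume (Metric.ball (0 : EuclideanSpace ℝ (Fin (n+1))) 1) := by
    rw [Measure.toSphere_apply_univ, finrank_euclideanSpace_fin]
  have hballpos : (volume (Metric.ball (0 : EuclideanSpace ℝ (Fin (n+1))) 1)) ≠ 0 :=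
    (measure_ball_pos _ _ one_pos).ne'
  have hballtop : (volume (Metric.ball (0 : EuclideanSpace ℝ (Fin (n+1))) 1)) ≠ ⊤ :=
    measure_ball_lt_top.ne
  have hM2ne0 : (volume : Measure (EuclideanSpace ℝ (Fin (n+1)))).toSphere Set.univ ≠ 0 := by
    rw [hM2]
    exact mul_ne_zero (Nat.cast_ne_zero.mpr (Nat.succ_ne_zero n)) hballpos
  have hM2top : (volume : Measure (EuclideanSpace ℝ (Fin (n+1)))).toSphere Set.univ ≠ ⊤ := by
    rw [hM2]
    exact ENNReal.mul_ne_top (ENNReal.natCast_ne_top _) hballtop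
  -- the key ENNReal inequality
  set r₀ : ℝ := 1/13 * (1 - t^2) ^ (D/2) / (Real.sqrt D * t) with hr₀def
  have hr₀ : 0 ≤ r₀ := by
    rw [hr₀def]
    have h1 : (0:ℝ) ≤ 1 - t^2 := by nlinarith
    positivity
  have hvols : ENNReal.ofReal r₀ *
      volume (Metric.ball (0 : EuclideanSpace ℝ (Fin (n+1))) 1) ≤
      ENNReal.ofReal ε * volume (Metric.ball (0 : EuclideanSpace ℝ (Fin n)) ρ) := by
    rw [EuclideanSpace.volume_ball, EuclideanSpace.volume_ball]
    simp only [Fintype.card_fin, ENNReal.ofReal_one, one_pow, one_mul]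
    rw [← ENNReal.ofReal_pow hρpos.le, ← ENNReal.ofReal_mul (pow_nonneg hρpos.le n),
      ← ENNReal.ofReal_mul hεpos.le, ← ENNReal.ofReal_mul hr₀]
    apply ENNReal.ofReal_le_ofReal
    have hrk := realKey n D t ε ρ hn hDdef hlog2 hlog5 htdef hεdef hρdef
    calc r₀ * (Real.sqrt π ^ (n+1) / Real.Gamma (((n+1:ℕ):ℝ)/2 + 1))
        = 1/13 * (1 - t^2) ^ (D/2) / (Real.sqrt D * t) *
          (Real.sqrt π ^ (n+1) / Real.Gamma (D/2 + 1)) := by rw [hr₀def, hDdef0]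
      _ ≤ ε * (ρ ^ n * (Real.sqrt π ^ n / Real.Gamma ((n:ℝ)/2 + 1))) := hrk
      _ = ε * (ρ ^ n * (Real.sqrt π ^ n / Real.Gamma (((n:ℕ):ℝ)/2 + 1))) := rfl
  have hkey : ENNReal.ofReal r₀ *
      (volume : Measure (EuclideanSpace ℝ (Fin (n+1)))).toSphere Set.univ ≤
      (volume : Measure (EuclideanSpace ℝ (Fin (n+1)))).toSphere cap := by
    rw [hM1, hM2, ← mul_assoc, mul_comm (ENNReal.ofReal r₀) ((n+1:ℕ) : ℝ≥0∞), mul_assoc]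
    apply mul_le_mul_right
    calc ENNReal.ofReal r₀ * volume (Metric.ball (0 : EuclideanSpace ℝ (Fin (n+1))) 1)
        ≤ ENNReal.ofReal ε * volume (Metric.ball (0 : EuclideanSpace ℝ (Fin n)) ρ) := hvols
      _ = volume Cyl := hCylvol.symm
      _ ≤ volume (Set.Ioo (0:ℝ) 1 • ((Subtype.val) '' cap)) := measure_mono hsub
  -- conclude
  have hgoal : capSigma (n+1) t (EuclideanSpace.single (⟨0, by omega⟩ : Fin (n+1)) 1) =
      (((volume : Measure (EuclideanSpace ℝ (Fin (n+1)))).toSphere cap) /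
        ((volume : Measure (EuclideanSpace ℝ (Fin (n+1)))).toSphere Set.univ)).toReal := rfl
  rw [hgoal]
  have hdivtop : ((volume : Measure (EuclideanSpace ℝ (Fin (n+1)))).toSphere cap) /
      ((volume : Measure (EuclideanSpace ℝ (Fin (n+1)))).toSphere Set.univ) ≠ ⊤ :=
    (ENNReal.div_lt_top (ne_top_of_le_ne_top hM2top (measure_mono (Set.subset_univ _))) hM2ne0).ne
  calc 1/13 * (1 - t^2) ^ (D/2) / (Real.sqrt D * t) = (ENNReal.ofReal r₀).toReal := by
        rw [ENNReal.toReal_ofReal hr₀, hr₀def]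
    _ ≤ _ := ENNReal.toReal_mono hdivtop
        ((ENNReal.le_div_iff_mul_le (Or.inl hM2ne0) (Or.inl hM2top)).mpr hkey)
end

section
/- For every integer d ≥ 10, (1 − (log d)/(2d))^{d/2} ≥ (13/280) · (log d)/√d. -/
/-!
With `t = log d / (2d) ∈ [0, 1/4]` one has `1 - t ≥ exp (-4t/3)`, so the left-hand side is at
least `exp (-log d / 3) = d^(-1/3)`. On the other side `log d ≤ 6 d^(1/6)`, so
`log d / √d ≤ 6 d^(-1/3)`, and `6 · 13/280 < 1`.
-/

open Real

lemma log_le_half_self {x : ℝ} (hx : 0 < x) : log x ≤ x / 2 := by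
  have h_e : exp 1 * log x ≤ x := by simpa [exp_log hx] using exp_one_mul_le_exp (x := log x)
  have h_two : 2 ≤ exp 1 := by linarith [add_one_le_exp 1]
  rcases le_or_gt 0 (log x) with hlog | hlog <;> nlinarith

lemma exp_neg_four_thirds_mul_le_one_sub {t : ℝ} (ht₀ : 0 ≤ t) (ht₁ : t ≤ 1 / 4) :
    exp (-(4 / 3 * t)) ≤ 1 - t := by
  rw [exp_neg, inv_le_iff_one_le_mul₀ (exp_pos _)]
  -- `(1 - t) (1 + 4t/3) = 1 + t (1 - 4t) / 3`
  nlinarith [add_one_le_exp (4 / 3 * t)]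

lemma rpow_neg_third_le_one_sub_log_div_rpow {x : ℝ} (hx : 1 ≤ x) :
    x ^ (-(1 / 3) : ℝ) ≤ (1 - log x / (2 * x)) ^ (x / 2) := by
  have hx₀ : 0 < x := by linarith
  have ht₀ : 0 ≤ log x / (2 * x) := div_nonneg (log_nonneg hx) (by positivity)
  have ht₁ : log x / (2 * x) ≤ 1 / 4 := by
    rw [div_le_iff₀ (by positivity)]
    linarith [log_le_half_self hx₀]
  calc x ^ (-(1 / 3) : ℝ) = exp (-(4 / 3 * (log x / (2 * x)))) ^ (x / 2) := by
        rw [rpow_def_of_pos hx₀, ← exp_mul]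
        congr 1
        field_simp
        ring
    _ ≤ (1 - log x / (2 * x)) ^ (x / 2) :=
        rpow_le_rpow (exp_pos _).le (exp_neg_four_thirds_mul_le_one_sub ht₀ ht₁) (by positivity)

lemma log_div_sqrt_le_six_mul_rpow_neg_third {x : ℝ} (hx : 0 < x) :
    log x / √x ≤ 6 * x ^ (-(1 / 3) : ℝ) := by
  have h_log : log x ≤ x ^ (1 / 6 : ℝ) / (1 / 6) := log_le_rpow_div hx.le (by norm_num)
  have h_split : x ^ (1 / 6 : ℝ) = x ^ (-(1 / 3) : ℝ) * √x := by
    rw [sqrt_eq_rpow, ← rpow_add hx]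
    norm_num
  rw [div_le_iff₀ (sqrt_pos.mpr hx)]
  linarith

/-- For every integer `d ≥ 10`,
`(1 - (log d)/(2d))^{d/2} ≥ (13/280) · (log d)/√d`. -/
theorem key_real_inequality
    (d : ℕ) (hd : 10 ≤ d) :
    (13 / 280) * Real.log d / Real.sqrt d ≤
      (1 - Real.log d / (2 * d)) ^ ((d : ℝ) / 2) := by
  have hd₁ : (1 : ℝ) ≤ d := by exact_mod_cast (by omega : 1 ≤ d)
  have h_rpow : 0 ≤ (d : ℝ) ^ (-(1 / 3) : ℝ) := by positivity
  calc (13 / 280) * Real.log d / Real.sqrt d = 13 / 280 * (Real.log d / Real.sqrt d) := by ring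
    _ ≤ 13 / 280 * (6 * (d : ℝ) ^ (-(1 / 3) : ℝ)) := by
        gcongr
        exact log_div_sqrt_le_six_mul_rpow_neg_third (by linarith)
    _ ≤ (d : ℝ) ^ (-(1 / 3) : ℝ) := by linarith
    _ ≤ (1 - Real.log d / (2 * d)) ^ ((d : ℝ) / 2) := rpow_neg_third_le_one_sub_log_div_rpow hd₁
end
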